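/- arXiv:2503.08820 — 10 statements merged into one kernel-verified Lean document; each statement's English description precedes it below -/
import Mathlib

section
/- Let D be a diagram with no ghost cells. Two diagrams D₁, D₂ in the ghost Kohnert poset P_G(D) satisfy D₂ ⋖ D₁ (D₁ covers D₂) if and only if there exists a row r such that D₂ = G(D₁, r) and D₂ ≠ D₁; that is, covering relations in P_G(D) are exactly single nontrivial ghost moves. -/
/-- A diagram: finitely many regular cells and ghost cells in ℕ × ℕ. -/
structure Diagram where
  cells : Finset (ℕ × ℕ)
  ghosts : Finset (ℕ × ℕ)
  disj : Disjoint cells ghosts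

namespace Diagram

/-- A position is occupied if it holds a regular or a ghost cell. -/
def Occupied (D : Diagram) (p : ℕ × ℕ) : Prop := p ∈ D.cells ∨ p ∈ D.ghosts

/-- `MoveSpec D r c r' D'`: the (nontrivial) ghost move at row `r` of `D` moves the
rightmost cell `(r,c)` (a regular cell) down to the highest empty position `(r',c)`
below in its column, with no intervening ghost cell, leaving a ghost cell at `(r,c)`;
the result is `D'`. -/
def MoveSpec (D : Diagram) (r c r' : ℕ) (D' : Diagram) : Prop :=
  (r, c) ∈ D.cells ∧
  (∀ c', c < c' → ¬ D.Occupied (r, c')) ∧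
  r' < r ∧ ¬ D.Occupied (r', c) ∧
  (∀ r'', r' < r'' → r'' < r → (r'', c) ∈ D.cells) ∧
  D'.cells = insert (r', c) (D.cells.erase (r, c)) ∧
  D'.ghosts = insert (r, c) D.ghosts

/-- `D'` is obtained from `D` by a single nontrivial ghost move. -/
def Move (D D' : Diagram) : Prop := ∃ r c r', MoveSpec D r c r' D'

/-- `D'` is reachable from `D` by a (possibly empty) sequence of ghost moves. -/
def Reaches (D D' : Diagram) : Prop := Relation.ReflTransGen Move D D'

/-- The set of diagrams obtainable from `D` by sequences of ghost moves. -/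
def GKD (D : Diagram) : Set Diagram := {T | D.Reaches T}

/-- The order of the ghost Kohnert poset: `dle T' T` means `T' ⪯ T`. -/
def dle (T' T : Diagram) : Prop := T.Reaches T'

/-- Strict order: `T' ≺ T`. -/
def dlt (T' T : Diagram) : Prop := dle T' T ∧ T' ≠ T

/-- `CoveredBy T' T`: `T` covers `T'` in the ghost Kohnert poset. -/
def CoveredBy (T' T : Diagram) : Prop :=
  dlt T' T ∧ ∀ U, dlt T' U → dlt U T → False

/-- `(r,c)` is a free cell of `D`: it is the rightmost cell of row `r` and some
position strictly below it in column `c` is empty. -/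
def Free (D : Diagram) (r c : ℕ) : Prop :=
  (r, c) ∈ D.cells ∧ (∀ c', c < c' → ¬ D.Occupied (r, c')) ∧
  ∃ r' < r, ¬ D.Occupied (r', c)

end Diagram

open Diagram

lemma move_ghost_card {T T' : Diagram} (h : Move T T') :
    T'.ghosts.card = T.ghosts.card + 1 := by
  obtain ⟨r, c, r', hc, _, _, _, _, _, hg⟩ := h
  have hnot : (r, c) ∉ T.ghosts :=
    fun hm => (Finset.disjoint_left.mp T.disj hc) hm
  rw [hg, Finset.card_insert_of_notMem hnot]

lemma reaches_ghost_card {T T' : Diagram} (h : Reaches T T') :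
    T.ghosts.card ≤ T'.ghosts.card := by
  induction h with
  | refl => exact le_refl _
  | tail _ hm ih => exact ih.trans (move_ghost_card hm ▸ Nat.le_succ _)

lemma reaches_ne_ghost_card {T T' : Diagram} (h : Reaches T T') (hne : T ≠ T') :
    T.ghosts.card + 1 ≤ T'.ghosts.card := by
  rcases (Relation.reflTransGen_iff_eq_or_transGen.mp h) with rfl | h'
  · exact absurd rfl hne
  · clear hne h
    induction h' with
    | single hm => exact (move_ghost_card hm).ge
    | tail _ hm ih =>
        have := move_ghost_card hm; omega

/-- covering relations in `P_G(D)` are exactly single nontrivial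
ghost moves. -/
theorem cover_iff_ghost_move (D : Diagram) (hD : D.ghosts = ∅)
    (D₁ : Diagram) (h₁ : D₁ ∈ D.GKD) (D₂ : Diagram) (h₂ : D₂ ∈ D.GKD) :
    CoveredBy D₂ D₁ ↔ Move D₁ D₂ := by
  constructor
  · rintro ⟨⟨hr, hne⟩, hcov⟩
    rcases (Relation.ReflTransGen.cases_head hr) with rfl | ⟨U, hm, hru⟩
    · exact absurd rfl hne
    · by_cases hU : U = D₂
      · exact hU ▸ hm
      · have hUne : D₁ ≠ U := fun h => by
          have := move_ghost_card hm; rw [← h] at this; omega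
        exact absurd (hcov U ⟨hru, fun h => hU h.symm⟩
          ⟨Relation.ReflTransGen.single hm, fun h => hUne h.symm⟩) id
  · intro hm
    have hcard := move_ghost_card hm
    have hne : D₂ ≠ D₁ := fun h => by rw [h] at hcard; omega
    refine ⟨⟨Relation.ReflTransGen.single hm, hne⟩, fun U ⟨h2u, h2une⟩ ⟨hu1, hu1ne⟩ => ?_⟩
    have a := reaches_ne_ghost_card hu1 (fun h => hu1ne h.symm)
    have b := reaches_ne_ghost_card h2u (fun h => h2une h.symm)
    omega
end

section
/- Let D be a diagram with no ghost cells, and let T ∈ GKD(D). If (r,c) is a regular cell of T, then for every diagram T' ⪯ T in the ghost Kohnert poset, either (r,c) is a regular cell of T' or ⟨r,c⟩ is a ghost cell of T'; i.e., once a position is occupied, it remains occupied (possibly by a ghost) in all smaller diagrams. -/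
open Diagram

lemma move_occ {A B : Diagram} (h : Move A B) {p : ℕ × ℕ} (hp : A.Occupied p) :
    B.Occupied p := by
  obtain ⟨r, c, r', hmem, _, _, _, _, hcells, hghosts⟩ := h
  unfold Diagram.Occupied at *
  rw [hcells, hghosts]
  rcases hp with hp | hp
  · by_cases hpe : p = (r, c)
    · right; simp [hpe]
    · left; simp [Finset.mem_insert, Finset.mem_erase, hpe, hp]
  · right; simp [hp]

/-- once a position holds a regular cell, it stays occupied (possibly
by a ghost cell) in every smaller diagram. -/
theorem occupied_persists (D : Diagram) (hD : D.ghosts = ∅)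
    (T : Diagram) (hT : T ∈ D.GKD) (r c : ℕ) (hc : (r, c) ∈ T.cells) :
    ∀ T', dle T' T → (r, c) ∈ T'.cells ∨ (r, c) ∈ T'.ghosts := by
  intro T' h
  have : T.Occupied (r, c) := Or.inl hc
  induction h with
  | refl => exact this
  | tail _ hmove ih => exact move_occ hmove ih
end

section
/- Let D be a diagram with no ghost cells and T ∈ GKD(D). Suppose there exist a column c and rows r₁ < r₂ such that ⟨r₁,c⟩ is a ghost cell of T and (r̃,c) is a regular cell of T for all r₁ < r̃ ≤ r₂. Then (r₂,c) is a regular cell of every T' ⪯ T in the ghost Kohnert poset; i.e., a regular cell sitting on top of a solid column capped below by a ghost cell can never move. -/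
open Diagram

/-- a regular cell sitting atop a solid column of regular cells capped
below by a ghost cell can never move. -/
theorem blocked_cell_persists (D : Diagram) (hD : D.ghosts = ∅)
    (T : Diagram) (hT : T ∈ D.GKD) (c r₁ r₂ : ℕ) (hr : r₁ < r₂)
    (hg : (r₁, c) ∈ T.ghosts)
    (hcol : ∀ rr, r₁ < rr → rr ≤ r₂ → (rr, c) ∈ T.cells) :
    ∀ T', dle T' T → (r₂, c) ∈ T'.cells := by
  intro T' hle
  have step : ∀ A B : Diagram, Move A B →
      ((r₁, c) ∈ A.ghosts ∧ ∀ rr, r₁ < rr → rr ≤ r₂ → (rr, c) ∈ A.cells) →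
      ((r₁, c) ∈ B.ghosts ∧ ∀ rr, r₁ < rr → rr ≤ r₂ → (rr, c) ∈ B.cells) := by
    rintro A B ⟨r, c', r', hmem, _, hr'lt, hempty, hbetween, hcells, hghosts⟩ ⟨ihg, ihc⟩
    constructor
    · rw [hghosts]; exact Finset.mem_insert_of_mem ihg
    · intro rr h1 h2
      rw [hcells]
      by_cases heq : (r, c') = (rr, c)
      · exfalso
        obtain ⟨hrq, hcq⟩ := Prod.mk.injEq .. ▸ heq
        subst hrq
        rw [hcq] at hbetween hempty
        -- moving cell (r, c) with r₁ < r ≤ r₂, down to r' < r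
        rcases lt_or_ge r' r₁ with h | h
        · -- r' < r₁ < r, so (r₁, c) ∈ A.cells, contradicting ghost
          have : (r₁, c) ∈ A.cells := hbetween r₁ h h1
          exact (Finset.disjoint_left.mp A.disj this) ihg
        · -- r₁ ≤ r' < r : (r', c) occupied
          rcases eq_or_lt_of_le h with h | h
          · exact hempty (Or.inr (h ▸ ihg))
          · exact hempty (Or.inl (ihc r' h (le_trans (le_of_lt hr'lt) h2)))
      · exact Finset.mem_insert_of_mem (Finset.mem_erase.mpr ⟨fun hq => heq hq.symm, ihc rr h1 h2⟩)
  have inv : (r₁, c) ∈ T'.ghosts ∧ ∀ rr, r₁ < rr → rr ≤ r₂ → (rr, c) ∈ T'.cells := by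
    induction hle with
    | refl => exact ⟨hg, hcol⟩
    | tail _ hmove ih => exact step _ _ hmove ih
  exact inv.2 r₂ hr le_rfl
end

section
/- Let D be a diagram with no ghost cells. If D₀, D₁, D₂, D₃ ∈ GKD(D) satisfy D₃ ⋖ D₁ ⋖ D₀ and D₃ ⋖ D₂ ⋖ D₀ with D₁ ≠ D₂ (a 'diamond'), then the two ghost moves involved commute: there exist rows r₁ ≠ r₂, columns c₁, c₂, and target rows r₁*, r₂* such that D₁ is obtained from D₀ by moving cell (r₁,c₁) down to (r₁*,c₁) leaving ghost ⟨r₁,c₁⟩, D₂ is obtained from D₀ by moving (r₂,c₂) down to (r₂*,c₂) leaving ghost ⟨r₂,c₂⟩, and D₃ is obtained from D₁ by the same move as D₂ from D₀, and also from D₂ by the same move as D₁ from D₀. -/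
open Diagram

lemma Diagram.ext' {A B : Diagram} (hc : A.cells = B.cells) (hg : A.ghosts = B.ghosts) :
    A = B := by cases A; cases B; simp_all

lemma move_ghost_card_s5 {A B : Diagram} (h : Move A B) :
    B.ghosts.card = A.ghosts.card + 1 := by
  obtain ⟨r, c, r', hmem, -, -, -, -, -, hg⟩ := h
  rw [hg, Finset.card_insert_of_notMem (Finset.disjoint_left.mp A.disj hmem)]

lemma move_ne {A B : Diagram} (h : Move A B) : A ≠ B := by
  intro e; have := move_ghost_card_s5 h; rw [e] at this; omega

lemma covered_move {T' T : Diagram} (h : CoveredBy T' T) : Move T T' := by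
  obtain ⟨⟨hr, hne⟩, hmin⟩ := h
  rcases (Relation.ReflTransGen.cases_head hr) with he | ⟨U, hmv, hU⟩
  · exact absurd he.symm hne
  · by_cases hUe : U = T'
    · exact hUe ▸ hmv
    · exact absurd (hmin U ⟨hU, fun e => hUe e.symm⟩
        ⟨Relation.ReflTransGen.single hmv, (move_ne hmv).symm⟩) (by simp)

lemma target_unique {A B C : Diagram} {r c r' r'' : ℕ}
    (h1 : MoveSpec A r c r' B) (h2 : MoveSpec A r c r'' C) : r' = r'' := by
  by_contra hne
  rcases lt_or_gt_of_ne hne with h | h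
  · exact h2.2.2.2.1 (Or.inl (h1.2.2.2.2.1 r'' h h2.2.2.1))
  · exact h1.2.2.2.1 (Or.inl (h2.2.2.2.2.1 r' h h1.2.2.1))

lemma rightmost_unique {A B C : Diagram} {r c₁ c₂ r' r'' : ℕ}
    (h1 : MoveSpec A r c₁ r' B) (h2 : MoveSpec A r c₂ r'' C) : c₁ = c₂ := by
  by_contra hne
  rcases lt_or_gt_of_ne hne with h | h
  · exact h1.2.1 c₂ h (Or.inl h2.1)
  · exact h2.2.1 c₁ h (Or.inl h1.1)

lemma occ_mono {A B : Diagram} {r c r' : ℕ} (h : MoveSpec A r c r' B)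
    {p : ℕ × ℕ} (hp : A.Occupied p) : B.Occupied p := by
  obtain ⟨hm, -, -, -, -, hc, hg⟩ := h
  rcases hp with hp | hp
  · by_cases he : p = (r, c)
    · exact Or.inr (by rw [hg, he]; exact Finset.mem_insert_self _ _)
    · exact Or.inl (by rw [hc]; exact Finset.mem_insert_of_mem (Finset.mem_erase.mpr ⟨he, hp⟩))
  · exact Or.inr (by rw [hg]; exact Finset.mem_insert_of_mem hp)

/-- in a diamond `D₃ ⋖ D₁, D₂ ⋖ D₀`, the two ghost moves commute. -/
theorem diamond_moves_commute (D : Diagram) (hD : D.ghosts = ∅)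
    (D₀ D₁ D₂ D₃ : Diagram)
    (h₀ : D₀ ∈ D.GKD) (h₁ : D₁ ∈ D.GKD) (h₂ : D₂ ∈ D.GKD) (h₃ : D₃ ∈ D.GKD)
    (hc₁ : CoveredBy D₁ D₀) (hc₂ : CoveredBy D₂ D₀)
    (hc₃ : CoveredBy D₃ D₁) (hc₄ : CoveredBy D₃ D₂) (hne : D₁ ≠ D₂) :
    ∃ r₁ c₁ r₁' r₂ c₂ r₂', r₁ ≠ r₂ ∧
      MoveSpec D₀ r₁ c₁ r₁' D₁ ∧ MoveSpec D₀ r₂ c₂ r₂' D₂ ∧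
      MoveSpec D₁ r₂ c₂ r₂' D₃ ∧ MoveSpec D₂ r₁ c₁ r₁' D₃ := by
  obtain ⟨r₁, c₁, r₁', m1⟩ := covered_move hc₁
  obtain ⟨r₂, c₂, r₂', m2⟩ := covered_move hc₂
  obtain ⟨a, b, a', m3⟩ := covered_move hc₃
  obtain ⟨d, e, d', m4⟩ := covered_move hc₄
  -- step 1 : (r₁, c₁) ≠ (r₂, c₂)
  have step1 : ((r₁ : ℕ), c₁) ≠ (r₂, c₂) := by
    intro h
    obtain ⟨h1, h2⟩ := Prod.mk.injEq .. ▸ h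
    subst h1; subst h2
    have ht : r₁' = r₂' := target_unique m1 m2
    exact hne (Diagram.ext' (by rw [m1.2.2.2.2.2.1, m2.2.2.2.2.2.1, ht])
      (by rw [m1.2.2.2.2.2.2, m2.2.2.2.2.2.2]))
  -- ghosts analysis
  have hg1 : D₁.ghosts = insert (r₁, c₁) D₀.ghosts := m1.2.2.2.2.2.2
  have hg2 : D₂.ghosts = insert (r₂, c₂) D₀.ghosts := m2.2.2.2.2.2.2
  have hg3 : D₃.ghosts = insert (a, b) (insert (r₁, c₁) D₀.ghosts) := by
    rw [m3.2.2.2.2.2.2, hg1]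
  have hg4 : D₃.ghosts = insert (d, e) (insert (r₂, c₂) D₀.ghosts) := by
    rw [m4.2.2.2.2.2.2, hg2]
  have hr1G : (r₁, c₁) ∉ D₀.ghosts := Finset.disjoint_left.mp D₀.disj m1.1
  have hr2G : (r₂, c₂) ∉ D₀.ghosts := Finset.disjoint_left.mp D₀.disj m2.1
  have hde : ((d : ℕ), e) = (r₁, c₁) := by
    have h : (r₁, c₁) ∈ D₃.ghosts := by
      rw [hg3]; exact Finset.mem_insert_of_mem (Finset.mem_insert_self _ _)
    rw [hg4] at h
    rcases Finset.mem_insert.mp h with h | h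
    · exact h.symm
    · rcases Finset.mem_insert.mp h with h | h
      · exact absurd h step1
      · exact absurd h hr1G
  have hab : ((a : ℕ), b) = (r₂, c₂) := by
    have h : (r₂, c₂) ∈ D₃.ghosts := by
      rw [hg4]; exact Finset.mem_insert_of_mem (Finset.mem_insert_self _ _)
    rw [hg3] at h
    rcases Finset.mem_insert.mp h with h | h
    · exact h.symm
    · rcases Finset.mem_insert.mp h with h | h
      · exact absurd h.symm step1
      · exact absurd h hr2G
  obtain ⟨hab1, hab2⟩ := Prod.mk.injEq .. ▸ hab
  obtain ⟨hde1, hde2⟩ := Prod.mk.injEq .. ▸ hde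
  rw [hab1, hab2] at m3
  rw [hde1, hde2] at m4
  -- now m3 : MoveSpec D₁ r₂ c₂ a' D₃, m4 : MoveSpec D₂ r₁ c₁ d' D₃
  -- step 3 : r₁ ≠ r₂
  have step3 : r₁ ≠ r₂ := by
    intro h
    subst h
    exact step1 (by rw [rightmost_unique m1 m2])
  -- unoccupied facts
  have n1 : ¬ D₀.Occupied (r₁', c₁) := m1.2.2.2.1
  have n2 : ¬ D₀.Occupied (r₂', c₂) := m2.2.2.2.1
  have na1 : ¬ D₁.Occupied (a', c₂) := m3.2.2.2.1
  have nd2 : ¬ D₂.Occupied (d', c₁) := m4.2.2.2.1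
  have na0 : ¬ D₀.Occupied (a', c₂) := fun h => na1 (occ_mono m1 h)
  have nd0 : ¬ D₀.Occupied (d', c₁) := fun h => nd2 (occ_mono m2 h)
  -- cells equations
  have hc1 : D₁.cells = insert (r₁', c₁) (D₀.cells.erase (r₁, c₁)) := m1.2.2.2.2.2.1
  have hc2 : D₂.cells = insert (r₂', c₂) (D₀.cells.erase (r₂, c₂)) := m2.2.2.2.2.2.1
  have hc3 : D₃.cells = insert (a', c₂) (D₁.cells.erase (r₂, c₂)) := m3.2.2.2.2.2.1
  have hc4 : D₃.cells = insert (d', c₁) (D₂.cells.erase (r₁, c₁)) := m4.2.2.2.2.2.1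
  -- membership in D₁.cells decomposes
  have memD1 : ∀ p : ℕ × ℕ, p ∈ D₁.cells → p = (r₁', c₁) ∨ p ∈ D₀.cells := by
    intro p hp
    rw [hc1] at hp
    rcases Finset.mem_insert.mp hp with h | h
    · exact Or.inl h
    · exact Or.inr (Finset.mem_of_mem_erase h)
  have memD2 : ∀ p : ℕ × ℕ, p ∈ D₂.cells → p = (r₂', c₂) ∨ p ∈ D₀.cells := by
    intro p hp
    rw [hc2] at hp
    rcases Finset.mem_insert.mp hp with h | h
    · exact Or.inl h
    · exact Or.inr (Finset.mem_of_mem_erase h)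
  -- the "bad case" is impossible
  have bad : ((r₂' : ℕ), c₂) ≠ (r₁', c₁) := by
    intro hb
    obtain ⟨hb1, hb2⟩ := Prod.mk.injEq .. ▸ hb
    -- derive a' = d'
    have hmem : ((a' : ℕ), c₂) ∈ D₃.cells := by
      rw [hc3]; exact Finset.mem_insert_self _ _
    rw [hc4] at hmem
    have had : ((a' : ℕ), c₂) = (d', c₁) := by
      rcases Finset.mem_insert.mp hmem with h | h
      · exact h
      · rcases memD2 _ (Finset.mem_of_mem_erase h) with h | h
        · exact absurd (h.trans hb) (fun e => na1 (Or.inl (e ▸ (by rw [hc1]; exact Finset.mem_insert_self _ _))))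
        · exact absurd (Or.inl h) na0
    obtain ⟨had1, had2⟩ := Prod.mk.injEq .. ▸ had
    -- now c₁ = c₂, a' = d'
    rcases lt_trichotomy r₁ r₂ with h | h | h
    · -- a' < r₁ (since d' < r₁ and a' = d'), and r₁ < r₂, so (r₁, c₂) ∈ D₁.cells; but ghost
      have hcell : ((r₁ : ℕ), c₂) ∈ D₁.cells :=
        m3.2.2.2.2.1 r₁ (had1 ▸ m4.2.2.1) h
      have hghost : ((r₁ : ℕ), c₂) ∈ D₁.ghosts := by
        rw [hg1, hb2]; exact Finset.mem_insert_self _ _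
      exact Finset.disjoint_left.mp D₁.disj hcell hghost
    · exact step3 h
    · have hcell : ((r₂ : ℕ), c₁) ∈ D₂.cells :=
        m4.2.2.2.2.1 r₂ (had1 ▸ m3.2.2.1) h
      have hghost : ((r₂ : ℕ), c₁) ∈ D₂.ghosts := by
        rw [hg2, hb2]; exact Finset.mem_insert_self _ _
      exact Finset.disjoint_left.mp D₂.disj hcell hghost
  -- (r₁', c₁) ∈ D₃.cells
  have hm1 : ((r₁' : ℕ), c₁) ∈ D₃.cells := by
    rw [hc3]
    refine Finset.mem_insert_of_mem (Finset.mem_erase.mpr ⟨?_, by rw [hc1]; exact Finset.mem_insert_self _ _⟩)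
    intro h; exact n1 (h ▸ Or.inl m2.1)
  have hd' : d' = r₁' := by
    rw [hc4] at hm1
    rcases Finset.mem_insert.mp hm1 with h | h
    · exact (Prod.mk.injEq .. ▸ h.symm).1
    · rcases memD2 _ (Finset.mem_of_mem_erase h) with h | h
      · exact absurd h.symm bad
      · exact absurd (Or.inl h) n1
  have hm2 : ((r₂' : ℕ), c₂) ∈ D₃.cells := by
    rw [hc4]
    refine Finset.mem_insert_of_mem (Finset.mem_erase.mpr ⟨?_, by rw [hc2]; exact Finset.mem_insert_self _ _⟩)
    intro h; exact n2 (h ▸ Or.inl m1.1)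
  have ha' : a' = r₂' := by
    rw [hc3] at hm2
    rcases Finset.mem_insert.mp hm2 with h | h
    · exact (Prod.mk.injEq .. ▸ h.symm).1
    · rcases memD1 _ (Finset.mem_of_mem_erase h) with h | h
      · exact absurd h bad
      · exact absurd (Or.inl h) n2
  rw [hd'] at m4
  rw [ha'] at m3
  exact ⟨r₁, c₁, r₁', r₂, c₂, r₂', step3, m1, m2, m3, m4⟩
end

section
/- Let D be a diagram with no ghost cells. If D₀, D₁, D₂, D₃ ∈ GKD(D) satisfy D₃ ⋖ Dᵢ ⋖ D₀ for i = 1,2 with D₁ ≠ D₂, then D₃ is the meet (greatest lower bound) of D₁ and D₂ in the ghost Kohnert poset P_G(D): every T ∈ GKD(D) with T ≺ D₁ and T ≺ D₂ satisfies T ⪯ D₃. -/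
open Diagram

namespace GhostAux

lemma Diagram.ext' {A B : Diagram} (hc : A.cells = B.cells) (hg : A.ghosts = B.ghosts) :
    A = B := by
  cases A; cases B; cases hc; cases hg; rfl

/-- All occupied positions. -/
def occF (Z : Diagram) : Finset (ℕ × ℕ) := Z.cells ∪ Z.ghosts

lemma occ_iff {Z : Diagram} {p : ℕ × ℕ} : Z.Occupied p ↔ p ∈ occF Z := by
  simp [Diagram.Occupied, occF]

lemma cell_not_ghost {Z : Diagram} {p : ℕ × ℕ} (h : p ∈ Z.cells) : p ∉ Z.ghosts :=
  Finset.disjoint_left.mp Z.disj h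

section Basic

variable {X Y : Diagram} {r c ρ : ℕ}

lemma ms_ghosts (h : MoveSpec X r c ρ Y) :
    Y.ghosts = insert (r, c) X.ghosts ∧ (r, c) ∉ X.ghosts :=
  ⟨h.2.2.2.2.2.2, cell_not_ghost h.1⟩

lemma ms_occF (h : MoveSpec X r c ρ Y) :
    occF Y = insert (ρ, c) (occF X) ∧ (ρ, c) ∉ occF X := by
  obtain ⟨h1, h2, h3, h4, h5, h6, h7⟩ := h
  refine ⟨?_, fun hm => h4 (occ_iff.mpr hm)⟩
  ext p
  by_cases hp : p = (r, c) <;>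
    simp [occF, h6, h7, hp, Finset.mem_union, Finset.mem_insert, Finset.mem_erase, h1]

lemma ms_unique {c' ρ' : ℕ} {Y' : Diagram} (h : MoveSpec X r c ρ Y)
    (h' : MoveSpec X r c' ρ' Y') : c = c' ∧ ρ = ρ' ∧ Y = Y' := by
  have hc : c = c' := by
    rcases Nat.lt_trichotomy c c' with hh | hh | hh
    · exact absurd (Or.inl h'.1) (h.2.1 c' hh)
    · exact hh
    · exact absurd (Or.inl h.1) (h'.2.1 c hh)
  subst hc
  have hρ : ρ = ρ' := by
    rcases Nat.lt_trichotomy ρ ρ' with hh | hh | hh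
    · exact absurd (Or.inl (h.2.2.2.2.1 ρ' hh h'.2.2.1)) h'.2.2.2.1
    · exact hh
    · exact absurd (Or.inl (h'.2.2.2.2.1 ρ hh h.2.2.1)) h.2.2.2.1
  subst hρ
  exact ⟨rfl, rfl, Diagram.ext' (h.2.2.2.2.2.1.trans h'.2.2.2.2.2.1.symm)
    (h.2.2.2.2.2.2.trans h'.2.2.2.2.2.2.symm)⟩

lemma exists_move (h1 : (r, c) ∈ X.cells) (h2 : ∀ c', c < c' → ¬ X.Occupied (r, c'))
    (h3 : ρ < r) (h4 : ¬ X.Occupied (ρ, c))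
    (h5 : ∀ r'', ρ < r'' → r'' < r → (r'', c) ∈ X.cells) :
    ∃ Y, MoveSpec X r c ρ Y := by
  refine ⟨⟨insert (ρ, c) (X.cells.erase (r, c)), insert (r, c) X.ghosts, ?_⟩,
    h1, h2, h3, h4, h5, rfl, rfl⟩
  rw [Finset.disjoint_left]
  intro p hp hp'
  simp only [Finset.mem_insert, Finset.mem_erase] at hp hp'
  rcases hp with hp | ⟨hne, hp⟩
  · rcases hp' with hp' | hp'
    · exact absurd (hp ▸ hp') (by simp; omega)
    · exact h4 (Or.inr (hp ▸ hp'))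
  · rcases hp' with hp' | hp'
    · exact hne hp'
    · exact cell_not_ghost hp hp'

end Basic

section Chains

variable {A B : Diagram}

lemma reaches_occF (h : Reaches A B) : occF A ⊆ occF B := by
  induction h with
  | refl => exact subset_rfl
  | tail _ hbc ih =>
      obtain ⟨r, c, ρ, hs⟩ := hbc
      rw [(ms_occF hs).1]
      exact ih.trans (Finset.subset_insert _ _)

lemma reaches_ghosts (h : Reaches A B) : A.ghosts ⊆ B.ghosts := by
  induction h with
  | refl => exact subset_rfl
  | tail _ hbc ih =>
      obtain ⟨r, c, ρ, hs⟩ := hbc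
      rw [(ms_ghosts hs).1]
      exact ih.trans (Finset.subset_insert _ _)

/-- If a ghost at `(r₂,c₂)` appears along a chain, the chain contains the
corresponding move. -/
lemma extract_move {r₂ c₂ : ℕ} {Y T : Diagram} (h : Reaches Y T)
    (h1 : (r₂, c₂) ∉ Y.ghosts) (h2 : (r₂, c₂) ∈ T.ghosts) :
    ∃ Z τ Z', Reaches Y Z ∧ MoveSpec Z r₂ c₂ τ Z' ∧ Reaches Z' T := by
  induction h using Relation.ReflTransGen.head_induction_on with
  | refl => exact absurd h2 h1
  | head hstep hrest ih =>
      rename_i U V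
      obtain ⟨a, b, τ₀, hs⟩ := hstep
      by_cases hab : (a, b) = (r₂, c₂)
      · obtain ⟨ha, hb⟩ : a = r₂ ∧ b = c₂ := by simpa [Prod.ext_iff] using hab
        subst ha; subst hb
        exact ⟨U, τ₀, V, Relation.ReflTransGen.refl, hs, hrest⟩
      · have h1' : (r₂, c₂) ∉ V.ghosts := by
          rw [(ms_ghosts hs).1, Finset.mem_insert]
          rintro (h | h)
          · exact hab h.symm
          · exact h1 h
        obtain ⟨Z, τ, Z', hz1, hz2, hz3⟩ := ih h1'
        exact ⟨Z, τ, Z', Relation.ReflTransGen.head ⟨a, b, τ₀, hs⟩ hz1, hz2, hz3⟩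

lemma cover_move {T' T : Diagram} (h : CoveredBy T' T) : Move T T' := by
  obtain ⟨⟨hle, hne⟩, hmid⟩ := h
  rcases Relation.ReflTransGen.cases_head hle with heq | ⟨U, hU, hUT'⟩
  · exact absurd heq.symm hne
  · by_cases hUeq : U = T'
    · exact hUeq ▸ hU
    · exfalso
      refine hmid U ⟨hUT', fun hh => hUeq hh.symm⟩ ⟨Relation.ReflTransGen.single hU, ?_⟩
      obtain ⟨r, c, ρ, hs⟩ := hU
      intro hh
      exact (ms_ghosts hs).2 (by
        have := (ms_ghosts hs).1
        rw [hh] at this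
        exact this ▸ Finset.mem_insert_self _ _)

end Chains

section Counting

variable (D₀ : Diagram) (r₂ c₂ : ℕ)

def gcnt (Z : Diagram) : ℕ := (Z.ghosts.filter (fun p => p.2 = c₂ ∧ r₂ < p.1)).card

def ocnt (Z : Diagram) : ℕ :=
  ((occF Z).filter (fun p => p.2 = c₂ ∧ r₂ < p.1 ∧ p ∉ occF D₀)).card

variable {X Y : Diagram} {r c ρ : ℕ}

lemma gcnt_move (hs : MoveSpec X r c ρ Y) :
    gcnt r₂ c₂ Y = gcnt r₂ c₂ X + (if c = c₂ ∧ r₂ < r then 1 else 0) := by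
  obtain ⟨hg, hng⟩ := ms_ghosts hs
  rw [gcnt, hg, Finset.filter_insert]
  split_ifs with h
  · rw [Finset.card_insert_of_notMem (fun hmem => hng (Finset.mem_filter.mp hmem).1)]; rfl
  · rfl

lemma ocnt_move (hs : MoveSpec X r c ρ Y) :
    ocnt D₀ r₂ c₂ Y =
      ocnt D₀ r₂ c₂ X + (if c = c₂ ∧ r₂ < ρ ∧ (ρ, c) ∉ occF D₀ then 1 else 0) := by
  obtain ⟨hg, hng⟩ := ms_occF hs
  rw [ocnt, hg, Finset.filter_insert]
  split_ifs with h
  · rw [Finset.card_insert_of_notMem (fun hmem => hng (Finset.mem_filter.mp hmem).1)]; rfl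
  · rfl

lemma ocnt_self : ocnt D₀ r₂ c₂ D₀ = 0 := by
  rw [ocnt, Finset.card_eq_zero, Finset.filter_eq_empty_iff]
  intro p hp
  simp only [not_and]
  intro _ _
  simp [hp]

lemma mono_cnt {A B : Diagram} (h : Reaches A B) :
    ocnt D₀ r₂ c₂ B + gcnt r₂ c₂ A ≤ ocnt D₀ r₂ c₂ A + gcnt r₂ c₂ B := by
  induction h with
  | refl => exact le_rfl
  | tail hab hbc ih =>
      obtain ⟨r, c, ρ, hs⟩ := hbc
      have hg := gcnt_move r₂ c₂ hs
      have ho := ocnt_move D₀ r₂ c₂ hs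
      have hlt : ρ < r := hs.2.2.1
      have key : (if c = c₂ ∧ r₂ < ρ ∧ (ρ, c) ∉ occF D₀ then 1 else 0) ≤
          (if c = c₂ ∧ r₂ < r then 1 else 0) := by
        split_ifs with h1 h2
        · exact le_rfl
        · exact absurd ⟨h1.1, lt_trans h1.2.1 hlt⟩ h2
        · exact Nat.zero_le _
        · exact le_rfl
      omega

lemma eq_cnt {A B : Diagram} (h : Reaches A B) (hg0 : (r₂, c₂) ∈ A.ghosts)
    (ho0 : occF D₀ ⊆ occF A) :
    ocnt D₀ r₂ c₂ B + gcnt r₂ c₂ A = ocnt D₀ r₂ c₂ A + gcnt r₂ c₂ B := by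
  induction h with
  | refl => rfl
  | tail hab hbc ih =>
      obtain ⟨r, c, ρ, hs⟩ := hbc
      have hgb := reaches_ghosts hab hg0
      have hob := ho0.trans (reaches_occF hab)
      have hg := gcnt_move r₂ c₂ hs
      have ho := ocnt_move D₀ r₂ c₂ hs
      have hlt : ρ < r := hs.2.2.1
      have key : (if c = c₂ ∧ r₂ < ρ ∧ (ρ, c) ∉ occF D₀ then 1 else 0) =
          (if c = c₂ ∧ r₂ < r then 1 else 0) := by
        by_cases hA : c = c₂ ∧ r₂ < r
        · rw [if_pos hA]
          obtain ⟨hc, hr⟩ := hA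
          subst hc
          have hρ : r₂ < ρ := by
            rcases Nat.lt_trichotomy ρ r₂ with hh | hh | hh
            · exact absurd hgb (cell_not_ghost (hs.2.2.2.2.1 r₂ hh hr))
            · exact absurd (Or.inr (hh ▸ hgb)) hs.2.2.2.1
            · exact hh
          rw [if_pos ⟨rfl, hρ, fun hmem => hs.2.2.2.1 (occ_iff.mpr (hob hmem))⟩]
        · rw [if_neg hA, if_neg (fun h1 => hA ⟨h1.1, lt_trans h1.2.1 hlt⟩)]
      omega

end Counting

section Main

lemma ngb {Y T : Diagram} {r₂ c₂ ρ₂ q : ℕ} (hYT : Reaches Y T)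
    (h1 : (r₂, c₂) ∉ Y.ghosts) (h2 : (r₂, c₂) ∈ T.ghosts)
    (hq : (q, c₂) ∈ Y.ghosts) (hq1 : ρ₂ < q) (hq2 : q < r₂)
    (hocc : ∀ τ, ρ₂ < τ → τ < r₂ → (τ, c₂) ∈ occF Y) : False := by
  obtain ⟨Z, τ, Z', hYZ, hz, _⟩ := extract_move hYT h1 h2
  have hqZ : (q, c₂) ∈ Z.ghosts := reaches_ghosts hYZ hq
  rcases Nat.lt_trichotomy τ q with hh | hh | hh
  · exact cell_not_ghost (hz.2.2.2.2.1 q hh hq2) hqZ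
  · exact hz.2.2.2.1 (Or.inr (hh ▸ hqZ))
  · exact hz.2.2.2.1 (occ_iff.mpr (reaches_occF hYZ (hocc τ (lt_trans hq1 hh) hz.2.2.1)))

lemma b1 {D₂ T : Diagram} {c₂ ρ₂ cs : ℕ} (hQ : Reaches D₂ T)
    (hcell : (ρ₂, c₂) ∈ D₂.cells)
    (hng : (ρ₂, cs) ∉ D₂.ghosts) (hgT : (ρ₂, cs) ∈ T.ghosts) (hcs : cs < c₂) : False := by
  obtain ⟨W, τ, W', hW, hz, _⟩ := extract_move hQ hng hgT
  exact hz.2.1 c₂ hcs (occ_iff.mpr (reaches_occF hW (Finset.mem_union_left _ hcell)))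

lemma main_lemma {D₀ D₂ T : Diagram} {r₂ c₂ ρ₂ : ℕ}
    (specD2 : MoveSpec D₀ r₂ c₂ ρ₂ D₂) (hQ : Reaches D₂ T)
    (hgT : (r₂, c₂) ∈ T.ghosts) :
    ∀ X, Reaches X T → Reaches D₀ X → ∀ X', MoveSpec X r₂ c₂ ρ₂ X' → Reaches X' T := by
  intro X h
  induction h using Relation.ReflTransGen.head_induction_on with
  | refl =>
      intro _ X' hsX
      exact absurd hgT (cell_not_ghost hsX.1)
  | head hstep hrest ih =>
      rename_i X0 Y0
      intro hD0X X' hsX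
      obtain ⟨s, cs, σ, hsY⟩ := hstep
      by_cases hsr : s = r₂
      · subst hsr
        obtain ⟨hc, hρ, hXY⟩ := ms_unique hsX hsY
        exact hXY ▸ hrest
      · have hpairne : (s, cs) ≠ (r₂, c₂) := fun h => hsr (congrArg Prod.fst h)
        have x1 := hsX.1
        have x2 := hsX.2.1
        have x3 := hsX.2.2.1
        have x4 := hsX.2.2.2.1
        have x5 := hsX.2.2.2.2.1
        have x6 := hsX.2.2.2.2.2.1
        have y1 := hsY.1
        have y2 := hsY.2.1
        have y3 := hsY.2.2.1
        have y4 := hsY.2.2.2.1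
        have y5 := hsY.2.2.2.2.1
        have y6 := hsY.2.2.2.2.2.1
        have y7 := hsY.2.2.2.2.2.2
        have hoY := ms_occF hsY
        have hoX := ms_occF hsX
        have hgY : (r₂, c₂) ∉ Y0.ghosts := by
          rw [y7, Finset.mem_insert]
          rintro (h | h)
          · exact hpairne h.symm
          · exact cell_not_ghost x1 h
        have hD0Y : Reaches D₀ Y0 := hD0X.tail ⟨s, cs, σ, hsY⟩
        have cond2 : ∀ c', c₂ < c' → ¬ Y0.Occupied (r₂, c') := by
          intro c' hc' hocc
          rw [occ_iff, hoY.1, Finset.mem_insert] at hocc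
          rcases hocc with hocc | hocc
          · obtain ⟨Z, τ, Z', hYZ, hz, _⟩ := extract_move hrest hgY hgT
            refine hz.2.1 c' hc' (occ_iff.mpr (reaches_occF hYZ ?_))
            rw [hoY.1]
            rw [hocc]
            exact Finset.mem_insert_self _ _
          · exact x2 c' hc' (occ_iff.mpr hocc)
        have cond4 : ¬ Y0.Occupied (ρ₂, c₂) := by
          intro hocc
          rw [occ_iff, hoY.1, Finset.mem_insert] at hocc
          rcases hocc with hocc | hocc
          · obtain ⟨hσ, rfl⟩ : ρ₂ = σ ∧ c₂ = cs := by simpa [Prod.ext_iff] using hocc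
            rcases Nat.lt_or_ge s r₂ with hslt | hsge
            · -- s strictly between ρ₂ and r₂ becomes a blocking ghost
              refine ngb (ρ₂ := ρ₂) hrest hgY hgT ?_ (by omega) hslt ?_
              · rw [y7]; exact Finset.mem_insert_self _ _
              · intro τ h1 h2
                rw [hoY.1]
                exact Finset.mem_insert_of_mem (Finset.mem_union_left _ (x5 τ h1 h2))
            · -- s > r₂ : counting contradiction
              have hsgt : r₂ < s := lt_of_le_of_ne hsge (Ne.symm hsr)
              have e1 := gcnt_move r₂ c₂ hsY
              rw [if_pos ⟨rfl, hsgt⟩] at e1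
              have e2 := ocnt_move D₀ r₂ c₂ hsY
              rw [if_neg (fun hcon => by have := hcon.2.1; omega)] at e2
              have m1 := mono_cnt D₀ r₂ c₂ hD0X
              have m2 := mono_cnt D₀ r₂ c₂ hrest
              have hgD2 : (r₂, c₂) ∈ D₂.ghosts := by
                rw [(ms_ghosts specD2).1]; exact Finset.mem_insert_self _ _
              have hoD2 : occF D₀ ⊆ occF D₂ := by
                rw [(ms_occF specD2).1]; exact Finset.subset_insert _ _
              have m3 := eq_cnt D₀ r₂ c₂ hQ hgD2 hoD2
              have gD2 := gcnt_move r₂ c₂ specD2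
              rw [if_neg (fun hcon => by have := hcon.2; omega)] at gD2
              have oD2 := ocnt_move D₀ r₂ c₂ specD2
              rw [if_neg (fun hcon => by have := hcon.2.1; have := specD2.2.2.1; omega)] at oD2
              have oD0 := ocnt_self D₀ r₂ c₂
              omega
          · exact x4 (occ_iff.mpr hocc)
        have cond5 : ∀ r'', ρ₂ < r'' → r'' < r₂ → (r'', c₂) ∈ Y0.cells := by
          intro r'' h1 h2
          have hx := x5 r'' h1 h2
          by_cases heq : ((r'' : ℕ), c₂) = (s, cs)
          · exfalso
            obtain ⟨rfl, rfl⟩ : r'' = s ∧ c₂ = cs := by simpa [Prod.ext_iff] using heq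
            have hσ : σ = ρ₂ := by
              rcases Nat.lt_trichotomy σ ρ₂ with hh | hh | hh
              · exact absurd (Or.inl (y5 ρ₂ hh (by omega))) x4
              · exact hh
              · exact absurd (Or.inl (x5 σ hh (by omega))) y4
            exact cond4 (Or.inl (by rw [y6, ← hσ]; exact Finset.mem_insert_self _ _))
          · rw [y6, Finset.mem_insert]
            exact Or.inr (Finset.mem_erase.mpr ⟨heq, hx⟩)
        have cond1 : (r₂, c₂) ∈ Y0.cells := by
          rw [y6]
          exact Finset.mem_insert_of_mem (Finset.mem_erase.mpr ⟨Ne.symm hpairne, x1⟩)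
        obtain ⟨Y', hsY'⟩ := exists_move cond1 cond2 x3 cond4 cond5
        have hY'T : Reaches Y' T := ih hD0Y Y' hsY'
        have w6 := hsY'.2.2.2.2.2.1
        have w7 := hsY'.2.2.2.2.2.2
        have d2 : (ρ₂, c₂) ≠ (σ, cs) := by
          intro h
          exact cond4 (Or.inl (by rw [h, y6]; exact Finset.mem_insert_self _ _))
        have d3 : (ρ₂, c₂) ≠ (s, cs) := by
          intro h
          exact x4 (Or.inl (by rw [h]; exact y1))
        have d4 : (σ, cs) ≠ (r₂, c₂) := by
          intro h
          exact y4 (Or.inl (by rw [h]; exact x1))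
        have hspec : MoveSpec X' s cs σ Y' := by
          refine ⟨?_, ?_, y3, ?_, ?_, ?_, ?_⟩
          · rw [x6]
            exact Finset.mem_insert_of_mem (Finset.mem_erase.mpr ⟨hpairne, y1⟩)
          · intro c' hc' hocc
            rw [occ_iff, hoX.1, Finset.mem_insert] at hocc
            rcases hocc with hocc | hocc
            · -- the dropped cell sits to the right of (s,cs) : B1 situation
              obtain ⟨hs1, hc1⟩ : s = ρ₂ ∧ c' = c₂ := by simpa [Prod.ext_iff] using hocc
              have y1' : (ρ₂, cs) ∈ X0.cells := by rw [← hs1]; exact y1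
              have hcellD2 : (ρ₂, c₂) ∈ D₂.cells := by
                rw [specD2.2.2.2.2.2.1]; exact Finset.mem_insert_self _ _
              have hngD2 : (ρ₂, cs) ∉ D₂.ghosts := by
                rw [(ms_ghosts specD2).1, Finset.mem_insert]
                rintro (h | h)
                · have : ρ₂ = r₂ := congrArg Prod.fst h
                  omega
                · exact cell_not_ghost y1' (reaches_ghosts hD0X h)
              have hghT : (ρ₂, cs) ∈ T.ghosts := by
                rw [← hs1]
                exact reaches_ghosts hrest (by rw [y7]; exact Finset.mem_insert_self _ _)
              exact b1 hQ hcellD2 hngD2 hghT (hc1 ▸ hc')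
            · exact y2 c' hc' (occ_iff.mpr hocc)
          · intro hocc
            rw [occ_iff, hoX.1, Finset.mem_insert] at hocc
            rcases hocc with hocc | hocc
            · exact d2 hocc.symm
            · exact y4 (occ_iff.mpr hocc)
          · intro r'' h1 h2
            have hy := y5 r'' h1 h2
            rw [x6, Finset.mem_insert]
            by_cases heq : ((r'' : ℕ), cs) = (r₂, c₂)
            · exfalso
              obtain ⟨rfl, rfl⟩ : r'' = r₂ ∧ cs = c₂ := by simpa [Prod.ext_iff] using heq
              have hσ : σ = ρ₂ := by
                rcases Nat.lt_trichotomy σ ρ₂ with hh | hh | hh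
                · exact absurd (Or.inl (y5 ρ₂ hh (by omega))) x4
                · exact hh
                · exact absurd (Or.inl (x5 σ hh (by omega))) y4
              exact d2 (by rw [hσ])
            · exact Or.inr (Finset.mem_erase.mpr ⟨heq, hy⟩)
          · rw [w6, y6, x6]
            ext p
            simp only [Finset.mem_insert, Finset.mem_erase]
            by_cases h1 : p = (ρ₂, c₂) <;> by_cases h2 : p = (σ, cs) <;>
              by_cases h3 : p = (r₂, c₂) <;> by_cases h4 : p = (s, cs) <;>
              simp_all
          · rw [w7, y7, hsX.2.2.2.2.2.2]
            exact Finset.insert_comm _ _ _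
        exact Relation.ReflTransGen.head ⟨s, cs, σ, hspec⟩ hY'T

end Main

end GhostAux

open GhostAux

/-- the bottom of a diamond is the meet of its two middle elements. -/
theorem diamond_bottom_is_meet (D : Diagram) (hD : D.ghosts = ∅)
    (D₀ D₁ D₂ D₃ : Diagram)
    (h₀ : D₀ ∈ D.GKD) (h₁ : D₁ ∈ D.GKD) (h₂ : D₂ ∈ D.GKD) (h₃ : D₃ ∈ D.GKD)
    (hc₁ : CoveredBy D₁ D₀) (hc₂ : CoveredBy D₂ D₀)
    (hc₃ : CoveredBy D₃ D₁) (hc₄ : CoveredBy D₃ D₂) (hne : D₁ ≠ D₂) :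
    ∀ T ∈ D.GKD, dlt T D₁ → dlt T D₂ → dle T D₃ := by
  intro T hT hT1 hT2
  obtain ⟨r₁, c₁, ρ₁, s1⟩ := cover_move hc₁
  obtain ⟨r₂, c₂, ρ₂, s2⟩ := cover_move hc₂
  obtain ⟨a, b, σs, s3⟩ := cover_move hc₃
  obtain ⟨e, f, σt, s4⟩ := cover_move hc₄
  have g1 := ms_ghosts s1
  have g2 := ms_ghosts s2
  have g3 := ms_ghosts s3
  have g4 := ms_ghosts s4
  have hr12 : (r₁, c₁) ≠ (r₂, c₂) := by
    intro h
    obtain ⟨hr, hc⟩ : r₁ = r₂ ∧ c₁ = c₂ := by simpa [Prod.ext_iff] using h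
    subst hr; subst hc
    exact hne (ms_unique s1 s2).2.2
  have hab : (a, b) = (r₂, c₂) := by
    have hmem : (r₂, c₂) ∈ D₃.ghosts := by
      rw [g4.1]
      exact Finset.mem_insert_of_mem (by rw [g2.1]; exact Finset.mem_insert_self _ _)
    rw [g3.1, Finset.mem_insert, g1.1, Finset.mem_insert] at hmem
    rcases hmem with h | h | h
    · exact h.symm
    · exact absurd h.symm hr12
    · exact absurd h (cell_not_ghost s2.1)
  obtain ⟨rfl, rfl⟩ : r₂ = a ∧ c₂ = b :=
    ⟨(congrArg Prod.fst hab).symm, (congrArg Prod.snd hab).symm⟩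
  have hef : (e, f) = (r₁, c₁) := by
    have hmem : (r₁, c₁) ∈ D₃.ghosts := by
      rw [g3.1]
      exact Finset.mem_insert_of_mem (by rw [g1.1]; exact Finset.mem_insert_self _ _)
    rw [g4.1, Finset.mem_insert, g2.1, Finset.mem_insert] at hmem
    rcases hmem with h | h | h
    · exact h.symm
    · exact absurd h hr12
    · exact absurd h (cell_not_ghost s1.1)
  obtain ⟨rfl, rfl⟩ : r₁ = e ∧ c₁ = f :=
    ⟨(congrArg Prod.fst hef).symm, (congrArg Prod.snd hef).symm⟩
  have hσs : σs = ρ₂ := by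
    have hmem : (ρ₂, c₂) ∈ D₃.cells := by
      rw [s4.2.2.2.2.2.1]
      refine Finset.mem_insert_of_mem (Finset.mem_erase.mpr ⟨?_, ?_⟩)
      · intro h
        exact s2.2.2.2.1 (Or.inl (by rw [h]; exact s1.1))
      · rw [s2.2.2.2.2.2.1]; exact Finset.mem_insert_self _ _
    rw [s3.2.2.2.2.2.1, Finset.mem_insert] at hmem
    rcases hmem with h | h
    · exact (Prod.ext_iff.mp h).1.symm
    · rw [Finset.mem_erase] at h
      obtain ⟨hne2, h⟩ := h
      rw [s1.2.2.2.2.2.1, Finset.mem_insert] at h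
      rcases h with h | h
      · exfalso
        obtain ⟨hρ, hcc⟩ : ρ₂ = ρ₁ ∧ c₂ = c₁ := by simpa [Prod.ext_iff] using h
        have hρ1 : ρ₁ < r₁ := s1.2.2.1
        have hρ2 : ρ₂ < r₂ := s2.2.2.1
        rcases Nat.lt_trichotomy r₁ r₂ with hlt | heq | hgt
        · have hg : (r₁, c₂) ∈ D₁.ghosts := by
            rw [g1.1, hcc]; exact Finset.mem_insert_self _ _
          rcases Nat.lt_trichotomy σs r₁ with hh | hh | hh
          · exact cell_not_ghost (s3.2.2.2.2.1 r₁ hh hlt) hg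
          · exact s3.2.2.2.1 (Or.inr (by rw [← hh] at hg; exact hg))
          · have hcell : (σs, c₂) ∈ D₀.cells := s2.2.2.2.2.1 σs (by omega) s3.2.2.1
            refine s3.2.2.2.1 (Or.inl ?_)
            rw [s1.2.2.2.2.2.1]
            refine Finset.mem_insert_of_mem (Finset.mem_erase.mpr ⟨?_, hcell⟩)
            intro hhh
            have : σs = r₁ := congrArg Prod.fst hhh
            omega
        · exact hr12 (by rw [heq, hcc])
        · have hg : (r₂, c₁) ∈ D₂.ghosts := by
            rw [g2.1, ← hcc]; exact Finset.mem_insert_self _ _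
          rcases Nat.lt_trichotomy σt r₂ with hh | hh | hh
          · exact cell_not_ghost (s4.2.2.2.2.1 r₂ hh hgt) hg
          · exact s4.2.2.2.1 (Or.inr (by rw [← hh] at hg; exact hg))
          · have hcell : (σt, c₁) ∈ D₀.cells := s1.2.2.2.2.1 σt (by omega) s4.2.2.1
            refine s4.2.2.2.1 (Or.inl ?_)
            rw [s2.2.2.2.2.2.1]
            have hcell' : (σt, c₂) ∈ D₀.cells := by rw [hcc]; exact hcell
            refine Finset.mem_insert_of_mem ?_
            rw [← hcc]
            refine Finset.mem_erase.mpr ⟨?_, hcell'⟩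
            intro hhh
            have : σt = r₂ := congrArg Prod.fst hhh
            omega
      · exact absurd (Or.inl (Finset.mem_of_mem_erase h)) s2.2.2.2.1
  have hQ : Reaches D₂ T := hT2.1
  have hghT : (r₂, c₂) ∈ T.ghosts :=
    reaches_ghosts hQ (by rw [g2.1]; exact Finset.mem_insert_self _ _)
  have hs3' : MoveSpec D₁ r₂ c₂ ρ₂ D₃ := hσs ▸ s3
  exact main_lemma s2 hQ hghT D₁ hT1.1
    (Relation.ReflTransGen.single ⟨r₁, c₁, ρ₁, s1⟩) D₃ hs3'
end

section
/- Let P be a finite poset with a unique maximal element. Suppose that for all x, y ∈ P that are covered by a common element z, either {x,y} has no common lower bound or the meet x ∧ y exists. Then P is a join-semilattice: every pair of elements of P has a least upper bound. -/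
/-!
Any two minimal upper bounds `u, v` of a nonempty set `s` that lie below a common `w` coincide,
by induction on `w`. If `u` or `v` equals `w`, this is minimality. Otherwise pick
`u ≤ u' ⋖ w` and `v ≤ v' ⋖ w`; an element of `s` lies below both, so the diamond condition
gives the meet `m = u' ⊓ v'`, which is an upper bound of `s`. A minimal upper bound `m₀ ≤ m`
then equals both `u` (induction below `u'`) and `v` (induction below `v'`).
With a top element every minimal upper bound is therefore the least one.
-/

def DiamondCondition (P : Type*) [PartialOrder P] : Prop :=
  ∀ x y z : P, x ⋖ z → y ⋖ z → (¬ ∃ w, w ≤ x ∧ w ≤ y) ∨ ∃ m, IsGLB {x, y} m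

theorem isTop_of_forall_isMax_eq {P : Type*} [PartialOrder P] [WellFoundedGT P] {m : P}
    (hm : ∀ b, IsMax b → b = m) : IsTop m := fun a ↦ by
  obtain ⟨b, hab, hb⟩ := exists_maximal_ge_of_wellFoundedGT (fun _ ↦ True) a trivial
  exact hm b (fun c hbc ↦ hb.2 trivial hbc) ▸ hab

namespace DiamondCondition

variable {P : Type*} [PartialOrder P] [WellFoundedLT P] [IsStronglyCoatomic P]

theorem eq_of_minimal_upperBounds (h : DiamondCondition P) {s : Set P} (hs : s.Nonempty)
    {u v w : P} (hu : Minimal (· ∈ upperBounds s) u) (hv : Minimal (· ∈ upperBounds s) v)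
    (huw : u ≤ w) (hvw : v ≤ w) : u = v := by
  induction w using WellFoundedLT.induction generalizing u v with
  | ind w IH =>
    obtain rfl | huw := huw.eq_or_lt
    · exact hu.eq_of_ge hv.prop hvw
    obtain rfl | hvw := hvw.eq_or_lt
    · exact (hv.eq_of_ge hu.prop huw.le).symm
    obtain ⟨u', huu', hu'w⟩ := exists_le_covBy_of_lt huw
    obtain ⟨v', hvv', hv'w⟩ := exists_le_covBy_of_lt hvw
    obtain ⟨a, ha⟩ := hs
    obtain hno | ⟨m, hm⟩ := h u' v' w hu'w hv'w
    · exact (hno ⟨a, (hu.prop ha).trans huu', (hv.prop ha).trans hvv'⟩).elim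
    have hmu' : m ≤ u' := hm.1 (Set.mem_insert _ _)
    have hmv' : m ≤ v' := hm.1 (Set.mem_insert_of_mem _ rfl)
    have hms : m ∈ upperBounds s := fun t ht ↦
      hm.2 (by simp [(hu.prop ht).trans huu', (hv.prop ht).trans hvv'])
    obtain ⟨m₀, hm₀m, hm₀⟩ := exists_minimal_le_of_wellFoundedLT _ m hms
    calc u = m₀ := IH u' hu'w.lt hu hm₀ huu' (hm₀m.trans hmu')
      _ = v := (IH v' hv'w.lt hv hm₀ hvv' (hm₀m.trans hmv')).symm

theorem exists_isLUB (h : DiamondCondition P) {top : P} (htop : IsTop top) {s : Set P}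
    (hs : s.Nonempty) : ∃ j, IsLUB s j := by
  obtain ⟨u, -, hu⟩ := exists_minimal_le_of_wellFoundedLT (· ∈ upperBounds s) top
    fun a _ ↦ htop a
  refine ⟨u, hu.prop, fun z hz ↦ ?_⟩
  obtain ⟨u₀, hu₀z, hu₀⟩ := exists_minimal_le_of_wellFoundedLT _ z hz
  exact (h.eq_of_minimal_upperBounds hs hu hu₀ (htop u) (htop u₀)).trans_le hu₀z

end DiamondCondition

/-- a finite poset with a unique maximal element, in which any two
elements covered by a common element either have no common lower bound or have a
meet, is a join-semilattice. -/
theorem join_semilattice_of_diamond_condition {P : Type*} [PartialOrder P] [Fintype P]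
    (hmax : ∃! m : P, IsMax m)
    (h : ∀ x y z : P, x ⋖ z → y ⋖ z →
      (¬ ∃ w, w ≤ x ∧ w ≤ y) ∨ ∃ m, IsGLB {x, y} m) :
    ∀ x y : P, ∃ j, IsLUB {x, y} j := by
  obtain ⟨top, -, htop⟩ := hmax
  intro x y
  exact DiamondCondition.exists_isLUB h (isTop_of_forall_isMax_eq htop)
    (Set.insert_nonempty x {y})
end

section
/- Let D be a diagram with no ghost cells. If the ghost Kohnert poset P_G(D) is bounded (has a unique minimal element), then the free cell sequence of D is strictly increasing. -/
open Diagram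

/- ====================  auxiliary machinery  ==================== -/

namespace GhostAux

lemma occ_def {T : Diagram} {p : ℕ × ℕ} :
    T.Occupied p ↔ p ∈ T.cells ∨ p ∈ T.ghosts := Iff.rfl

lemma reaches_def {T T' : Diagram} :
    T.Reaches T' ↔ Relation.ReflTransGen Move T T' := Iff.rfl

/-- Greatest element below a bound satisfying `P`. -/
lemma exists_max_lt {P : ℕ → Prop} :
    ∀ {t : ℕ}, (∃ x, x < t ∧ P x) →
    ∃ g, g < t ∧ P g ∧ ∀ x, g < x → x < t → ¬ P x := by
  intro t
  induction t with
  | zero => rintro ⟨x, hx, -⟩; omega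
  | succ n ih =>
    intro h
    by_cases hn : P n
    · exact ⟨n, Nat.lt_succ_self n, hn, fun x h1 h2 => absurd h2 (by omega)⟩
    · obtain ⟨x, hx, hPx⟩ := h
      have hxn : x ≠ n := fun e => hn (e ▸ hPx)
      obtain ⟨g, h1, h2, h3⟩ := ih ⟨x, by omega, hPx⟩
      refine ⟨g, by omega, h2, fun y hy1 hy2 => ?_⟩
      by_cases hyn : y = n
      · exact hyn ▸ hn
      · exact h3 y hy1 (by omega)

/-- Construct the diagram resulting from a valid move. -/
lemma make_move (T : Diagram) (r c r₂ : ℕ)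
    (hc : (r, c) ∈ T.cells)
    (hr : ∀ y, c < y → ¬ T.Occupied (r, y))
    (hlt : r₂ < r)
    (hocc : ¬ T.Occupied (r₂, c))
    (hbet : ∀ x, r₂ < x → x < r → (x, c) ∈ T.cells) :
    ∃ T', MoveSpec T r c r₂ T' := by
  have hne : (r₂, c) ≠ (r, c) := fun e => absurd (congrArg Prod.fst e) (by omega)
  have hdisj : Disjoint (insert (r₂, c) (T.cells.erase (r, c))) (insert (r, c) T.ghosts) := by
    rw [Finset.disjoint_left]
    intro a ha hb
    rcases Finset.mem_insert.mp ha with rfl | ha'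
    · rcases Finset.mem_insert.mp hb with he | hb'
      · exact hne he
      · exact hocc (Or.inr hb')
    · have ha2 := Finset.mem_of_mem_erase ha'
      rcases Finset.mem_insert.mp hb with rfl | hb'
      · exact (Finset.mem_erase.mp ha').1 rfl
      · exact Finset.disjoint_left.mp T.disj ha2 hb'
  exact ⟨⟨insert (r₂, c) (T.cells.erase (r, c)), insert (r, c) T.ghosts, hdisj⟩,
    hc, hr, hlt, hocc, hbet, rfl, rfl⟩

lemma occ_mono_move {T T' : Diagram} (h : Move T T') {p : ℕ × ℕ}
    (hp : T.Occupied p) : T'.Occupied p := by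
  obtain ⟨r, c, r₂, _, _, _, _, _, hcells, hghosts⟩ := h
  rcases hp with h1 | h1
  · by_cases he : p = (r, c)
    · right; rw [hghosts, he]; exact Finset.mem_insert_self _ _
    · left; rw [hcells]; exact Finset.mem_insert_of_mem (Finset.mem_erase.mpr ⟨he, h1⟩)
  · right; rw [hghosts]; exact Finset.mem_insert_of_mem h1

lemma ghosts_mono_move {T T' : Diagram} (h : Move T T') :
    T.ghosts ⊆ T'.ghosts := by
  obtain ⟨r, c, r₂, _, _, _, _, _, _, hghosts⟩ := h
  rw [hghosts]; exact Finset.subset_insert _ _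

lemma ghosts_mono_reaches {T T' : Diagram} (h : Relation.ReflTransGen Move T T') :
    T.ghosts ⊆ T'.ghosts := by
  induction h with
  | refl => exact Finset.Subset.refl _
  | tail _ hm ih => exact ih.trans (ghosts_mono_move hm)

/-- Blocking predicate: the cell at `(ρ,γ)` can never be the source of a move. -/
def Blocked (ρ γ : ℕ) (T : Diagram) : Prop :=
  (∃ y, γ < y ∧ T.Occupied (ρ, y)) ∨
  (∃ g₀, g₀ < ρ ∧ (g₀, γ) ∈ T.ghosts ∧ ∀ x, g₀ < x → x < ρ → T.Occupied (x, γ)) ∨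
  (∀ x, x < ρ → T.Occupied (x, γ))

/-- `(ρ,γ)` is blocked and is not a ghost: hereditarily, it never becomes a ghost. -/
def NB (ρ γ : ℕ) (T : Diagram) : Prop := Blocked ρ γ T ∧ (ρ, γ) ∉ T.ghosts

lemma NB_move {ρ γ : ℕ} {T T' : Diagram} (h : NB ρ γ T) (hm : Move T T') :
    NB ρ γ T' := by
  obtain ⟨hb, hng⟩ := h
  obtain ⟨r, c, r₂, hspec⟩ := hm
  have hmv : Move T T' := ⟨r, c, r₂, hspec⟩
  obtain ⟨hc, hright, hlt, hocc, hbet, hcells, hghosts⟩ := hspec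
  constructor
  · rcases hb with ⟨y, hy, hOy⟩ | ⟨g₀, hg₀, hgh, hall⟩ | hall
    · exact Or.inl ⟨y, hy, occ_mono_move hmv hOy⟩
    · exact Or.inr (Or.inl ⟨g₀, hg₀, ghosts_mono_move hmv hgh,
        fun x h1 h2 => occ_mono_move hmv (hall x h1 h2)⟩)
    · exact Or.inr (Or.inr fun x hx => occ_mono_move hmv (hall x hx))
  · rw [hghosts]
    intro hmem
    rcases Finset.mem_insert.mp hmem with he | he
    · -- the move had source (ρ,γ); Blocked rules this out
      have h1 : ρ = r := congrArg Prod.fst he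
      have h2 : γ = c := congrArg Prod.snd he
      subst h1; subst h2
      rcases hb with ⟨y, hy, hOy⟩ | ⟨g₀, hg₀, hgh, hall⟩ | hall
      · exact hright y hy hOy
      · rcases Nat.lt_trichotomy r₂ g₀ with h | h | h
        · exact Finset.disjoint_left.mp T.disj (hbet g₀ h hg₀) hgh
        · exact hocc (h ▸ Or.inr hgh)
        · exact hocc (hall r₂ h hlt)
      · exact hocc (hall r₂ hlt)
    · exact hng he

lemma NB_reaches {ρ γ : ℕ} {T T' : Diagram}
    (h : Relation.ReflTransGen Move T T') (hnb : NB ρ γ T) : NB ρ γ T' := by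
  induction h with
  | refl => exact hnb
  | tail _ hm ih => exact NB_move ih hm

/- ====================  termination  ==================== -/

def mu (T : Diagram) : ℕ := T.cells.sum Prod.fst

lemma mu_lt_of_move {T T' : Diagram} (h : Move T T') : mu T' < mu T := by
  obtain ⟨r, c, r₂, hc, _, hlt, hocc, _, hcells, _⟩ := h
  have h1 : (r₂, c) ∉ T.cells.erase (r, c) :=
    fun hmem => hocc (Or.inl (Finset.mem_of_mem_erase hmem))
  have h2 : mu T' = r₂ + (T.cells.erase (r, c)).sum Prod.fst := by
    rw [mu, hcells, Finset.sum_insert h1]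
  have h3 : mu T = r + (T.cells.erase (r, c)).sum Prod.fst := by
    rw [mu, ← Finset.add_sum_erase _ _ hc]
  omega

lemma exists_terminal (T : Diagram) :
    ∃ m, Relation.ReflTransGen Move T m ∧ ∀ m', ¬ Move m m' := by
  have key : ∀ n (T : Diagram), mu T ≤ n →
      ∃ m, Relation.ReflTransGen Move T m ∧ ∀ m', ¬ Move m m' := by
    intro n
    induction n with
    | zero =>
      intro T hT
      by_cases h : ∃ T', Move T T'
      · obtain ⟨T', hT'⟩ := h
        have := mu_lt_of_move hT'
        omega
      · exact ⟨T, Relation.ReflTransGen.refl, fun m' hm' => h ⟨m', hm'⟩⟩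
    | succ n ih =>
      intro T hT
      by_cases h : ∃ T', Move T T'
      · obtain ⟨T', hT'⟩ := h
        have hmu := mu_lt_of_move hT'
        obtain ⟨m, hm1, hm2⟩ := ih T' (by omega)
        exact ⟨m, Relation.ReflTransGen.head hT' hm1, hm2⟩
      · exact ⟨T, Relation.ReflTransGen.refl, fun m' hm' => h ⟨m', hm'⟩⟩
  exact key (mu T) T le_rfl

/- ====================  the contradiction engine  ==================== -/

lemma final_contra (D : Diagram)
    (hbdd : ∃! m, m ∈ D.GKD ∧ ∀ U ∈ D.GKD, dle U m → U = m)
    (ρ γ : ℕ) (U₁ U₂ : Diagram)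
    (h1 : Relation.ReflTransGen Move D U₁)
    (h2 : Relation.ReflTransGen Move D U₂)
    (hg : (ρ, γ) ∈ U₁.ghosts) (hnb : NB ρ γ U₂) : False := by
  obtain ⟨m₀, -, huniq⟩ := hbdd
  obtain ⟨m₁, e1, t1⟩ := exists_terminal U₁
  obtain ⟨m₂, e2, t2⟩ := exists_terminal U₂
  have hmin : ∀ (m : Diagram), Relation.ReflTransGen Move D m → (∀ m', ¬ Move m m') →
      m ∈ D.GKD ∧ ∀ U ∈ D.GKD, dle U m → U = m := by
    intro m hDm hterm
    refine ⟨hDm, fun U _ hle => ?_⟩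
    have hle' : Relation.ReflTransGen Move m U := hle
    rcases Relation.ReflTransGen.cases_head hle' with h | ⟨x, hx, -⟩
    · exact h.symm
    · exact absurd hx (hterm x)
  have q1 : m₁ = m₀ := huniq m₁ (hmin m₁ (h1.trans e1) t1)
  have q2 : m₂ = m₀ := huniq m₂ (hmin m₂ (h2.trans e2) t2)
  have hg1 : (ρ, γ) ∈ m₁.ghosts := ghosts_mono_reaches e1 hg
  have hnb2 : NB ρ γ m₂ := NB_reaches e2 hnb
  rw [q2, ← q1] at hnb2
  exact hnb2.2 hg1

/- ====================  cascade for Case 1  ==================== -/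

/-- Cascade a cell in column `b > c'` down to row `r'`, occupying `(r', b)`. -/
lemma cascade1 (r' c' b : ℕ) (hb : c' < b) :
    ∀ t, r' < t → ∀ T : Diagram,
      (t, b) ∈ T.cells →
      (∀ x y, r' < x → b < y → ¬ T.Occupied (x, y)) →
      ¬ T.Occupied (r', b) →
      (∀ p ∈ T.ghosts, p.2 = b → t < p.1) →
      (r', c') ∉ T.ghosts →
      ∃ U, Relation.ReflTransGen Move T U ∧
        (∃ y, c' < y ∧ U.Occupied (r', y)) ∧ (r', c') ∉ U.ghosts := by
  intro t
  induction t using Nat.strong_induction_on with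
  | _ t ih =>
  intro hrt T hcell hreg hrb hgcol hgn
  have hex : ∃ x, x < t ∧ (x, b) ∉ T.cells :=
    ⟨r', hrt, fun hm => hrb (Or.inl hm)⟩
  obtain ⟨g, hgt, hgnc, hgmax⟩ := exists_max_lt hex
  have hgge : r' ≤ g := by
    by_contra hlt'
    push_neg at hlt'
    have := hgmax r' hlt' hrt
    rw [not_not] at this
    exact hrb (Or.inl this)
  have hgocc : ¬ T.Occupied (g, b) := by
    rintro (h | h)
    · exact hgnc h
    · exact absurd (hgcol _ h rfl) (by omega)
  have hbet : ∀ x, g < x → x < t → (x, b) ∈ T.cells :=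
    fun x h1 h2 => not_not.mp (hgmax x h1 h2)
  obtain ⟨T', hspec⟩ := make_move T t b g hcell (fun y hy => hreg t y hrt hy) hgt hgocc hbet
  have hmv : Move T T' := ⟨t, b, g, hspec⟩
  obtain ⟨-, -, -, -, -, hcells', hghosts'⟩ := hspec
  have hocc' : ∀ p, T'.Occupied p → T.Occupied p ∨ p = (g, b) ∨ p = (t, b) := by
    rintro p (hp | hp)
    · rw [hcells'] at hp
      rcases Finset.mem_insert.mp hp with h | h
      · exact Or.inr (Or.inl h)
      · exact Or.inl (Or.inl (Finset.mem_of_mem_erase h))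
    · rw [hghosts'] at hp
      rcases Finset.mem_insert.mp hp with h | h
      · exact Or.inr (Or.inr h)
      · exact Or.inl (Or.inr h)
  have hgn' : (r', c') ∉ T'.ghosts := by
    rw [hghosts']
    intro hm
    rcases Finset.mem_insert.mp hm with he | he
    · have : r' = t := congrArg Prod.fst he
      omega
    · exact hgn he
  rcases eq_or_lt_of_le hgge with heq | hlt2
  · -- landed at row r' : done
    refine ⟨T', Relation.ReflTransGen.single hmv, ⟨b, hb, Or.inl ?_⟩, hgn'⟩
    rw [hcells', heq]
    exact Finset.mem_insert_self _ _
  · -- recurse from station g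
    have h1' : (g, b) ∈ T'.cells := by
      rw [hcells']; exact Finset.mem_insert_self _ _
    have hreg' : ∀ x y, r' < x → b < y → ¬ T'.Occupied (x, y) := by
      intro x y hx hy hO
      rcases hocc' _ hO with h | h | h
      · exact hreg x y hx hy h
      · have : y = b := congrArg Prod.snd h; omega
      · have : y = b := congrArg Prod.snd h; omega
    have hrb' : ¬ T'.Occupied (r', b) := by
      intro hO
      rcases hocc' _ hO with h | h | h
      · exact hrb h
      · have : r' = g := congrArg Prod.fst h; omega
      · have : r' = t := congrArg Prod.fst h; omega
    have hgcol' : ∀ p ∈ T'.ghosts, p.2 = b → g < p.1 := by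
      rw [hghosts']
      intro p hp hpb
      rcases Finset.mem_insert.mp hp with rfl | h
      · exact hgt
      · have := hgcol p h hpb; omega
    obtain ⟨U, hU1, hU2, hU3⟩ := ih g hgt hlt2 T' h1' hreg' hrb' hgcol' hgn'
    exact ⟨U, Relation.ReflTransGen.head hmv hU1, hU2, hU3⟩

/- ====================  cascade for Case 2  ==================== -/

/-- Cascade a cell in column `c` down through all the gaps strictly above `r'`. -/
lemma cascade2 (D : Diagram) (r' c : ℕ) :
    ∀ s, r' < s → ∀ T : Diagram,
      (s, c) ∈ T.cells →
      (∀ x y, r' < x → c < y → ¬ T.Occupied (x, y)) →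
      (r', c) ∈ T.cells →
      (∀ x, x < r' → (((x, c) ∈ T.cells ↔ (x, c) ∈ D.cells) ∧ (x, c) ∉ T.ghosts)) →
      (∀ p ∈ T.ghosts, p.2 = c ∧ s < p.1) →
      (∀ y, c < y → ¬ T.Occupied (r', y)) →
      ∃ W s', Relation.ReflTransGen Move T W ∧ r' < s' ∧
        (s', c) ∈ W.cells ∧
        (∀ x y, r' < x → c < y → ¬ W.Occupied (x, y)) ∧
        (r', c) ∈ W.cells ∧
        (∀ x, x < r' → (((x, c) ∈ W.cells ↔ (x, c) ∈ D.cells) ∧ (x, c) ∉ W.ghosts)) ∧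
        (∀ p ∈ W.ghosts, p.2 = c ∧ s' < p.1) ∧
        (∀ y, c < y → ¬ W.Occupied (r', y)) ∧
        (∀ x, r' < x → x < s' → (x, c) ∈ W.cells) := by
  intro s
  induction s using Nat.strong_induction_on with
  | _ s ih =>
  intro hrs T h1 h2 h3 h4 h5 h8
  by_cases hgap : ∃ x, x < s ∧ (r' < x ∧ (x, c) ∉ T.cells)
  case neg =>
    refine ⟨T, s, Relation.ReflTransGen.refl, hrs, h1, h2, h3, h4, h5, h8, ?_⟩
    intro x hx1 hx2
    by_contra hnc
    exact hgap ⟨x, hx2, hx1, hnc⟩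
  case pos =>
    obtain ⟨g, hgs, ⟨hrg, hgnc⟩, hgmax⟩ := exists_max_lt hgap
    have hbet : ∀ x, g < x → x < s → (x, c) ∈ T.cells := by
      intro x ha hb'
      have := hgmax x ha hb'
      push_neg at this
      exact this (by omega)
    have hgocc : ¬ T.Occupied (g, c) := by
      rintro (h | h)
      · exact hgnc h
      · exact absurd (h5 _ h).2 (by omega)
    obtain ⟨T', hspec⟩ := make_move T s c g h1 (fun y hy => h2 s y hrs hy) hgs hgocc hbet
    have hmv : Move T T' := ⟨s, c, g, hspec⟩
    obtain ⟨-, -, -, -, -, hcells', hghosts'⟩ := hspec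
    have hocc' : ∀ p, T'.Occupied p → T.Occupied p ∨ p = (g, c) ∨ p = (s, c) := by
      rintro p (hp | hp)
      · rw [hcells'] at hp
        rcases Finset.mem_insert.mp hp with h | h
        · exact Or.inr (Or.inl h)
        · exact Or.inl (Or.inl (Finset.mem_of_mem_erase h))
      · rw [hghosts'] at hp
        rcases Finset.mem_insert.mp hp with h | h
        · exact Or.inr (Or.inr h)
        · exact Or.inl (Or.inr h)
    have h1' : (g, c) ∈ T'.cells := by
      rw [hcells']; exact Finset.mem_insert_self _ _
    have h2' : ∀ x y, r' < x → c < y → ¬ T'.Occupied (x, y) := by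
      intro x y hx hy hO
      rcases hocc' _ hO with h | h | h
      · exact h2 x y hx hy h
      · have : y = c := congrArg Prod.snd h; omega
      · have : y = c := congrArg Prod.snd h; omega
    have h3' : (r', c) ∈ T'.cells := by
      rw [hcells']
      refine Finset.mem_insert_of_mem (Finset.mem_erase.mpr ⟨?_, h3⟩)
      intro he
      have : r' = s := congrArg Prod.fst he
      omega
    have h4' : ∀ x, x < r' → (((x, c) ∈ T'.cells ↔ (x, c) ∈ D.cells) ∧ (x, c) ∉ T'.ghosts) := by
      intro x hx
      have hne1 : (x, c) ≠ (g, c) := fun e => absurd (congrArg Prod.fst e) (by omega)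
      have hne2 : (x, c) ≠ (s, c) := fun e => absurd (congrArg Prod.fst e) (by omega)
      constructor
      · rw [hcells']
        constructor
        · intro hm
          rcases Finset.mem_insert.mp hm with he | he
          · exact absurd he hne1
          · exact (h4 x hx).1.mp (Finset.mem_of_mem_erase he)
        · intro hm
          exact Finset.mem_insert_of_mem (Finset.mem_erase.mpr ⟨hne2, (h4 x hx).1.mpr hm⟩)
      · rw [hghosts']
        intro hm
        rcases Finset.mem_insert.mp hm with he | he
        · exact hne2 he
        · exact (h4 x hx).2 he
    have h5' : ∀ p ∈ T'.ghosts, p.2 = c ∧ g < p.1 := by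
      rw [hghosts']
      intro p hp
      rcases Finset.mem_insert.mp hp with rfl | h
      · exact ⟨rfl, hgs⟩
      · have := h5 p h
        exact ⟨this.1, by omega⟩
    have h8' : ∀ y, c < y → ¬ T'.Occupied (r', y) := by
      intro y hy hO
      rcases hocc' _ hO with h | h | h
      · exact h8 y hy h
      · have : y = c := congrArg Prod.snd h; omega
      · have : y = c := congrArg Prod.snd h; omega
    obtain ⟨W, s', hW, hrest⟩ := ih g hgs hrg T' h1' h2' h3' h4' h5' h8'
    exact ⟨W, s', Relation.ReflTransGen.head hmv hW, hrest⟩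

end GhostAux

open GhostAux

/-- if `P_G(D)` is bounded (unique minimal element), then the free
cell sequence of `D` is strictly increasing: a free cell in a strictly higher row
lies in a strictly smaller column. -/
theorem bounded_implies_free_seq_increasing (D : Diagram) (hD : D.ghosts = ∅)
    (hbdd : ∃! m, m ∈ D.GKD ∧ ∀ U ∈ D.GKD, dle U m → U = m) :
    ∀ r c r' c', Free D r c → Free D r' c' → r' < r → c < c' := by
  intro r c r' c' hf hf' hlt
  by_contra hcc
  push_neg at hcc
  obtain ⟨hfc, hfr, hfb⟩ := hf
  obtain ⟨hfc', hfr', hfb'⟩ := hf'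
  have hnoghost : ∀ p : ℕ × ℕ, p ∉ D.ghosts := by
    intro p hp; rw [hD] at hp; exact Finset.notMem_empty p hp
  -- U₁ : the single move of the free cell (r', c')
  obtain ⟨g₁, hg1lt, hg1occ, hg1max⟩ := exists_max_lt hfb'
  have hbet1 : ∀ x, g₁ < x → x < r' → (x, c') ∈ D.cells := by
    intro x hx1 hx2
    have := hg1max x hx1 hx2
    rw [not_not] at this
    rcases this with h | h
    · exact h
    · exact absurd h (hnoghost _)
  obtain ⟨U₁, hspec₁⟩ := make_move D r' c' g₁ hfc' hfr' hg1lt hg1occ hbet1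
  have hmv₁ : Move D U₁ := ⟨r', c', g₁, hspec₁⟩
  have hgU₁ : (r', c') ∈ U₁.ghosts := by
    rw [hspec₁.2.2.2.2.2.2]
    exact Finset.mem_insert_self _ _
  by_cases hcase : ∃ p ∈ D.cells, r' < p.1 ∧ c' < p.2
  · -- CASE 1: some cell strictly above r' and strictly right of c'
    obtain ⟨p₀, hp₀, hp₀r, hp₀c⟩ := hcase
    set t₀ := D.cells.sup Prod.snd + 1 with ht₀
    have hex : ∃ y, y < t₀ ∧ (c' < y ∧ ∃ x, r' < x ∧ (x, y) ∈ D.cells) := by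
      refine ⟨p₀.2, ?_, hp₀c, p₀.1, hp₀r, by simpa using hp₀⟩
      have := Finset.le_sup (f := Prod.snd) hp₀
      omega
    obtain ⟨b, hbt, ⟨hbc, a, har, hab⟩, hbmax⟩ := exists_max_lt hex
    have hreg : ∀ x y, r' < x → b < y → ¬ D.Occupied (x, y) := by
      intro x y hx hy hO
      rcases hO with h | h
      · have hyt : y < t₀ := by
          have := Finset.le_sup (f := Prod.snd) h
          simp only [ht₀] at *
          omega
        exact hbmax y hy hyt ⟨by omega, x, hx, h⟩
      · exact hnoghost _ h
    obtain ⟨U₂, hr₂, hy₂, hgn₂⟩ :=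
      cascade1 r' c' b hbc a har D hab hreg (hfr' b hbc)
        (fun p hp _ => absurd hp (hnoghost p)) (hnoghost _)
    exact final_contra D hbdd r' c' U₁ U₂ (Relation.ReflTransGen.single hmv₁) hr₂ hgU₁
      ⟨Or.inl hy₂, hgn₂⟩
  · -- CASE 2: nothing strictly above r' and strictly right of c'; then c = c'
    push_neg at hcase
    have hcc2 : c = c' := le_antisymm (hcase (r, c) hfc hlt) hcc
    subst hcc2
    -- cascade (r, c) down to the last gap above r'
    have h2D : ∀ x y, r' < x → c < y → ¬ D.Occupied (x, y) := by
      intro x y hx hy hO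
      rcases hO with h | h
      · have := hcase (x, y) h hx
        simp only at this
        omega
      · exact hnoghost _ h
    obtain ⟨W, s', hRW, hrs', hW1, hW2, hW3, hW4, hW5, hW8, hWpark⟩ :=
      cascade2 D r' c r hlt D hfc h2D hfc'
        (fun x _ => ⟨Iff.rfl, hnoghost _⟩)
        (fun p hp => absurd hp (hnoghost p))
        hfr'
    -- the highest gap below r' in column c (in W; same as in D)
    have hexl : ∃ x, x < r' ∧ (x, c) ∉ W.cells := by
      obtain ⟨x, hx1, hx2⟩ := hfb'
      exact ⟨x, hx1, fun hm => hx2 (Or.inl ((hW4 x hx1).1.mp hm))⟩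
    obtain ⟨l₁, hl1, hl1nc, hl1max⟩ := exists_max_lt hexl
    have hl1occ : ¬ W.Occupied (l₁, c) := by
      rintro (h | h)
      · exact hl1nc h
      · exact (hW4 l₁ hl1).2 h
    have hbetl : ∀ x, l₁ < x → x < r' → (x, c) ∈ W.cells :=
      fun x ha hb => not_not.mp (hl1max x ha hb)
    -- V₁ : drop the parked cell (s', c) past r' to l₁; it leaves a ghost at (s', c)
    have hbetV₁ : ∀ x, l₁ < x → x < s' → (x, c) ∈ W.cells := by
      intro x ha hb
      rcases Nat.lt_trichotomy x r' with h | h | h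
      · exact hbetl x ha h
      · exact h ▸ hW3
      · exact hWpark x h hb
    obtain ⟨V₁, hspecV₁⟩ := make_move W s' c l₁ hW1 (fun y hy => hW2 s' y hrs' hy)
      (by omega) hl1occ hbetV₁
    have hmvV₁ : Move W V₁ := ⟨s', c, l₁, hspecV₁⟩
    have hgV₁ : (s', c) ∈ V₁.ghosts := by
      rw [hspecV₁.2.2.2.2.2.2]
      exact Finset.mem_insert_self _ _
    -- V₂ : move (r', c) down to l₁ instead; the ghost at (r', c) blocks (s', c) forever
    obtain ⟨V₂, hspecV₂⟩ := make_move W r' c l₁ hW3 hW8 hl1 hl1occ hbetl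
    have hmvV₂ : Move W V₂ := ⟨r', c, l₁, hspecV₂⟩
    have hNB : NB s' c V₂ := by
      constructor
      · refine Or.inr (Or.inl ⟨r', hrs', ?_, ?_⟩)
        · rw [hspecV₂.2.2.2.2.2.2]
          exact Finset.mem_insert_self _ _
        · intro x hx1 hx2
          have hxc : (x, c) ∈ W.cells := hWpark x hx1 hx2
          left
          rw [hspecV₂.2.2.2.2.2.1]
          refine Finset.mem_insert_of_mem (Finset.mem_erase.mpr ⟨?_, hxc⟩)
          intro he
          have : x = r' := congrArg Prod.fst he
          omega
      · rw [hspecV₂.2.2.2.2.2.2]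
        intro hm
        rcases Finset.mem_insert.mp hm with he | he
        · have : s' = r' := congrArg Prod.fst he
          omega
        · exact absurd (hW5 _ he).2 (by omega)
    exact final_contra D hbdd s' c V₁ V₂ (hRW.tail hmvV₁) (hRW.tail hmvV₂) hgV₁ hNB
end

section
/- Let D be a diagram with no ghost cells. If the ghost Kohnert poset P_G(D) is bounded, then D has at most one free cell per column, and the free cells of D occur in strictly descending row order as the columns increase (i.e., free cells further to the right are in strictly lower rows). -/
open Diagram

/-! ### Auxiliary machinery -/

lemma occupied_def (T : Diagram) (q : ℕ × ℕ) :
    T.Occupied q ↔ q ∈ T.cells ∨ q ∈ T.ghosts := Iff.rfl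

lemma move_cells_mem {T T' : Diagram} {r c e : ℕ} (h : MoveSpec T r c e T') {q : ℕ × ℕ} :
    q ∈ T'.cells ↔ q = (e, c) ∨ (q ∈ T.cells ∧ q ≠ (r, c)) := by
  rw [h.2.2.2.2.2.1, Finset.mem_insert, Finset.mem_erase]
  tauto

lemma move_ghosts {T T' : Diagram} {r c e : ℕ} (h : MoveSpec T r c e T') {q : ℕ × ℕ} :
    q ∈ T'.ghosts ↔ q = (r, c) ∨ q ∈ T.ghosts := by
  rw [h.2.2.2.2.2.2, Finset.mem_insert]

lemma move_occupied {T T' : Diagram} {r c e : ℕ} (h : MoveSpec T r c e T') {q : ℕ × ℕ} :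
    T'.Occupied q ↔ T.Occupied q ∨ q = (e, c) := by
  rw [occupied_def, occupied_def, move_cells_mem h, move_ghosts h]
  have h1 := h.1
  constructor
  · rintro ((rfl | ⟨hq, _⟩) | (rfl | hq))
    · exact Or.inr rfl
    · exact Or.inl (Or.inl hq)
    · exact Or.inl (Or.inl h1)
    · exact Or.inl (Or.inr hq)
  · rintro ((hq | hq) | rfl)
    · by_cases hqr : q = (r, c)
      · exact Or.inr (Or.inl hqr)
      · exact Or.inl (Or.inr ⟨hq, hqr⟩)
    · exact Or.inr (Or.inr hq)
    · exact Or.inl (Or.inl rfl)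

lemma occupied_reaches {T T' : Diagram} (h : T.Reaches T') {q : ℕ × ℕ}
    (hq : T.Occupied q) : T'.Occupied q := by
  induction h with
  | refl => exact hq
  | tail _ h2 ih =>
    obtain ⟨r, c, e, hs⟩ := h2
    exact (move_occupied hs).2 (Or.inl ih)

lemma ghosts_reaches {T T' : Diagram} (h : T.Reaches T') {q : ℕ × ℕ}
    (hq : q ∈ T.ghosts) : q ∈ T'.ghosts := by
  induction h with
  | refl => exact hq
  | tail _ h2 ih =>
    obtain ⟨r, c, e, hs⟩ := h2
    exact (move_ghosts hs).2 (Or.inr ih)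

/-- A cell that can never move again: either something is occupied to its right, or
every empty position below it in its column is blocked by a ghost. -/
def FrozenCell (p : ℕ × ℕ) (T : Diagram) : Prop :=
  p ∈ T.cells ∧
    ((∃ y, p.2 < y ∧ T.Occupied (p.1, y)) ∨
     (∀ t, t < p.1 → ¬ T.Occupied (t, p.2) → ∃ g, t < g ∧ g < p.1 ∧ (g, p.2) ∈ T.ghosts))

lemma frozen_move {T T' : Diagram} (h : Move T T') {p : ℕ × ℕ}
    (hf : FrozenCell p T) : FrozenCell p T' := by
  obtain ⟨r, c, e, hs⟩ := h
  obtain ⟨hpc, hrest⟩ := hf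
  have hpne : p ≠ (r, c) := by
    rintro rfl
    rcases hrest with ⟨y, hy, ho⟩ | h2
    · exact hs.2.1 y hy ho
    · obtain ⟨g, hg1, hg2, hgh⟩ := h2 e hs.2.2.1 hs.2.2.2.1
      exact Finset.disjoint_left.mp T.disj (hs.2.2.2.2.1 g hg1 hg2) hgh
  refine ⟨(move_cells_mem hs).2 (Or.inr ⟨hpc, hpne⟩), ?_⟩
  rcases hrest with ⟨y, hy, ho⟩ | h2
  · exact Or.inl ⟨y, hy, (move_occupied hs).2 (Or.inl ho)⟩
  · refine Or.inr fun t ht hto => ?_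
    have hnot : ¬ T.Occupied (t, p.2) := fun hh => hto ((move_occupied hs).2 (Or.inl hh))
    obtain ⟨g, hg1, hg2, hgh⟩ := h2 t ht hnot
    exact ⟨g, hg1, hg2, (move_ghosts hs).2 (Or.inr hgh)⟩

lemma frozen_reaches {T T' : Diagram} (h : T.Reaches T') {p : ℕ × ℕ}
    (hf : FrozenCell p T) : FrozenCell p T' := by
  induction h with
  | refl => exact hf
  | tail _ h2 ih => exact frozen_move h2 ih

lemma move_measure {T T' : Diagram} (h : Move T T') :
    ∑ p ∈ T'.cells, p.1 < ∑ p ∈ T.cells, p.1 := by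
  obtain ⟨r, c, e, h1, h2, h3, h4, h5, hc, hg⟩ := h
  have hnotmem : (e, c) ∉ T.cells.erase (r, c) := fun hm =>
    h4 (Or.inl (Finset.mem_of_mem_erase hm))
  have hsum : (∑ p ∈ T.cells.erase (r, c), p.1) + r = ∑ p ∈ T.cells, p.1 := by
    simpa using Finset.sum_erase_add T.cells (fun p => p.1) h1
  rw [hc, Finset.sum_insert hnotmem]
  simp only
  omega

lemma exists_terminal (T : Diagram) : ∃ m, T.Reaches m ∧ ∀ U, ¬ Move m U := by
  suffices H : ∀ n (T : Diagram), (∑ p ∈ T.cells, p.1) ≤ n →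
      ∃ m, T.Reaches m ∧ ∀ U, ¬ Move m U from H _ T le_rfl
  intro n
  induction n with
  | zero =>
    intro T hT
    by_cases h : ∃ U, Move T U
    · obtain ⟨U, hU⟩ := h
      have := move_measure hU
      omega
    · exact ⟨T, Relation.ReflTransGen.refl, fun U hU => h ⟨U, hU⟩⟩
  | succ n ih =>
    intro T hT
    by_cases h : ∃ U, Move T U
    · obtain ⟨U, hU⟩ := h
      obtain ⟨m, hm1, hm2⟩ := ih U (by have := move_measure hU; omega)
      exact ⟨m, Relation.ReflTransGen.head hU hm1, hm2⟩
    · exact ⟨T, Relation.ReflTransGen.refl, fun U hU => h ⟨U, hU⟩⟩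

/-- The key contradiction: if the poset has a unique minimal element, then no position
can be a ghost in one reachable diagram and a frozen cell in another. -/
lemma ghost_frozen_contra (D : Diagram)
    (hmin : ∃! m, m ∈ D.GKD ∧ ∀ U ∈ D.GKD, dle U m → U = m)
    {p : ℕ × ℕ} {T1 T2 : Diagram} (h1 : D.Reaches T1) (h2 : D.Reaches T2)
    (hg : p ∈ T1.ghosts) (hf : FrozenCell p T2) : False := by
  obtain ⟨m0, _, huniq⟩ := hmin
  obtain ⟨m1, hm1r, hm1t⟩ := exists_terminal T1
  obtain ⟨m2, hm2r, hm2t⟩ := exists_terminal T2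
  have key : ∀ m : Diagram, (∀ U, ¬ Move m U) → D.Reaches m → m = m0 := by
    intro m hmt hmr
    refine huniq m ⟨hmr, fun U _ hle => ?_⟩
    rcases Relation.ReflTransGen.cases_head (show Relation.ReflTransGen Move m U from hle) with
      h | ⟨b, hb, -⟩
    · exact h.symm
    · exact absurd hb (hmt b)
  have e1 : m1 = m0 := key m1 hm1t (Relation.ReflTransGen.trans h1 hm1r)
  have e2 : m2 = m0 := key m2 hm2t (Relation.ReflTransGen.trans h2 hm2r)
  have hg' : p ∈ m1.ghosts := ghosts_reaches hm1r hg
  have hc' : p ∈ m2.cells := (frozen_reaches hm2r hf).1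
  rw [e1] at hg'
  rw [e2] at hc'
  exact Finset.disjoint_left.mp m0.disj hc' hg'

lemma make_move (T : Diagram) (r c e : ℕ) (h1 : (r, c) ∈ T.cells)
    (h2 : ∀ y, c < y → ¬ T.Occupied (r, y)) (h3 : e < r) (h4 : ¬ T.Occupied (e, c))
    (h5 : ∀ x, e < x → x < r → (x, c) ∈ T.cells) :
    ∃ T', MoveSpec T r c e T' := by
  have hdisj : Disjoint (insert (e, c) (T.cells.erase (r, c))) (insert (r, c) T.ghosts) := by
    rw [Finset.disjoint_left]
    intro a ha hb
    rcases Finset.mem_insert.mp ha with rfl | ha'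
    · rcases Finset.mem_insert.mp hb with heq | hgm
      · have : e = r := congrArg Prod.fst heq
        omega
      · exact h4 (Or.inr hgm)
    · obtain ⟨hne, hac⟩ := Finset.mem_erase.mp ha'
      rcases Finset.mem_insert.mp hb with rfl | hgm
      · exact hne rfl
      · exact Finset.disjoint_left.mp T.disj hac hgm
  exact ⟨⟨_, _, hdisj⟩, h1, h2, h3, h4, h5, rfl, rfl⟩

lemma exists_max_empty (T : Diagram) (c ρ t : ℕ) (ht : t < ρ) (hte : ¬ T.Occupied (t, c)) :
    ∃ e, e < ρ ∧ ¬ T.Occupied (e, c) ∧ ∀ x, e < x → x < ρ → T.Occupied (x, c) := by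
  haveI : DecidablePred (fun x => ¬ T.Occupied (x, c)) := Classical.decPred _
  refine ⟨Nat.findGreatest (fun x => ¬ T.Occupied (x, c)) (ρ - 1), ?_, ?_, ?_⟩
  · have := Nat.findGreatest_le (P := fun x => ¬ T.Occupied (x, c)) (ρ - 1)
    omega
  · exact Nat.findGreatest_spec (P := fun x => ¬ T.Occupied (x, c)) (show t ≤ ρ - 1 by omega) hte
  · intro x hx hxρ
    by_contra hno
    exact Nat.findGreatest_is_greatest hx (show x ≤ ρ - 1 by omega) hno

lemma exists_max_occ_col (T : Diagram) (f c0 : ℕ) (h : ∃ y, c0 < y ∧ T.Occupied (f, y)) :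
    ∃ d, c0 < d ∧ T.Occupied (f, d) ∧ ∀ y, d < y → ¬ T.Occupied (f, y) := by
  classical
  set S := ((T.cells ∪ T.ghosts).filter (fun q => q.1 = f)).image Prod.snd with hS
  have hmem : ∀ y, T.Occupied (f, y) ↔ y ∈ S := by
    intro y
    constructor
    · intro hy
      exact Finset.mem_image.mpr ⟨(f, y),
        Finset.mem_filter.mpr ⟨Finset.mem_union.mpr hy, rfl⟩, rfl⟩
    · intro hy
      obtain ⟨q, hq, hqy⟩ := Finset.mem_image.mp hy
      obtain ⟨hq1, hq2⟩ := Finset.mem_filter.mp hq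
      have hqe : q = (f, y) := by
        obtain ⟨a, b⟩ := q
        simp only [Prod.mk.injEq]
        exact ⟨hq2, hqy⟩
      rw [hqe] at hq1
      exact Finset.mem_union.mp hq1
  obtain ⟨y0, hy0, hocc0⟩ := h
  have hne : S.Nonempty := ⟨y0, (hmem y0).1 hocc0⟩
  refine ⟨S.max' hne, lt_of_lt_of_le hy0 (Finset.le_max' S y0 ((hmem y0).1 hocc0)),
    (hmem _).2 (S.max'_mem hne), ?_⟩
  intro y hy hocc
  have := Finset.le_max' S y ((hmem y).1 hocc)
  omega

/-- Cascading lemma: a rightmost cell `(s,d)` with an empty position `(r,d)` below it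
(and no ghosts in rows `[r,s]`) can be used, by a sequence of moves in columns `≥ d`,
to occupy some position `(r, y)` with `y ≥ d`. -/
lemma fill_row : ∀ s : ℕ, ∀ (T : Diagram) (d r : ℕ),
    (s, d) ∈ T.cells →
    (∀ y, d < y → ¬ T.Occupied (s, y)) →
    r < s →
    ¬ T.Occupied (r, d) →
    (∀ q ∈ T.ghosts, q.1 < r ∨ s < q.1) →
    ∃ T' y, T.Reaches T' ∧ d ≤ y ∧ T'.Occupied (r, y) ∧
      ∀ q ∈ T.cells, q.2 < d → q ∈ T'.cells := by
  intro s
  induction s using Nat.strong_induction_on with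
  | _ s IH =>
  intro T d r hcell hright hrs hrd hgh
  obtain ⟨f, hf1, hf2, hf3⟩ := exists_max_empty T d s r hrs hrd
  have hfr : r ≤ f := by
    by_contra hlt
    exact hrd (hf3 r (by omega) hrs)
  have hbetween : ∀ x, f < x → x < s → (x, d) ∈ T.cells := by
    intro x hx1 hx2
    rcases hf3 x hx1 hx2 with h | h
    · exact h
    · have h' : (x, d).1 < r ∨ s < (x, d).1 := hgh _ h
      simp only at h'
      omega
  obtain ⟨T1, hT1⟩ := make_move T s d f hcell hright hf1 hf2 hbetween
  have hmv : Move T T1 := ⟨s, d, f, hT1⟩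
  by_cases hfr' : f = r
  · refine ⟨T1, d, Relation.ReflTransGen.single hmv, le_rfl, ?_, ?_⟩
    · rw [← hfr']
      exact (move_occupied hT1).2 (Or.inr rfl)
    · intro q hq hqd
      refine (move_cells_mem hT1).2 (Or.inr ⟨hq, ?_⟩)
      rintro rfl
      exact lt_irrefl d hqd
  · have hrf : r < f := by omega
    by_cases hocc : ∃ y, d < y ∧ T.Occupied (f, y)
    · obtain ⟨dh, hdh1, hdh2, hdh3⟩ := exists_max_occ_col T f d hocc
      have hdcell : (f, dh) ∈ T.cells := by
        rcases hdh2 with h | h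
        · exact h
        · have h' : (f, dh).1 < r ∨ s < (f, dh).1 := hgh _ h
          simp only at h'
          omega
      by_cases hoccr : T.Occupied (r, dh)
      · exact ⟨T, dh, Relation.ReflTransGen.refl, le_of_lt hdh1, hoccr, fun q hq _ => hq⟩
      · obtain ⟨T', y, hr1, hr2, hr3, hr4⟩ := IH f hf1 T dh r hdcell (fun y hy => hdh3 y hy)
          hrf hoccr (fun q hq => by rcases hgh q hq with h | h; exact Or.inl h; exact Or.inr (by omega))
        exact ⟨T', y, hr1, le_trans (le_of_lt hdh1) hr2, hr3,
          fun q hq hqd => hr4 q hq (by omega)⟩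
    · push_neg at hocc
      have hc1 : (f, d) ∈ T1.cells := (move_cells_mem hT1).2 (Or.inl rfl)
      have hr1 : ∀ y, d < y → ¬ T1.Occupied (f, y) := by
        intro y hy ho
        rcases (move_occupied hT1).1 ho with h | h
        · exact hocc y hy h
        · have : y = d := congrArg Prod.snd h
          omega
      have hrd1 : ¬ T1.Occupied (r, d) := by
        intro ho
        rcases (move_occupied hT1).1 ho with h | h
        · exact hrd h
        · have : r = f := congrArg Prod.fst h
          omega
      have hgh1 : ∀ q ∈ T1.ghosts, q.1 < r ∨ f < q.1 := by
        intro q hq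
        rcases (move_ghosts hT1).1 hq with rfl | h
        · exact Or.inr (show f < s from hf1)
        · rcases hgh q h with h' | h'
          · exact Or.inl h'
          · exact Or.inr (by omega)
      obtain ⟨T', y, hr1', hr2, hr3, hr4⟩ := IH f hf1 T1 d r hc1 hr1 hrf hrd1 hgh1
      refine ⟨T', y, Relation.ReflTransGen.head hmv hr1', hr2, hr3, ?_⟩
      intro q hq hqd
      refine hr4 q ((move_cells_mem hT1).2 (Or.inr ⟨hq, ?_⟩)) hqd
      rintro rfl
      exact lt_irrefl d hqd

/-- Two free cells in the same column give a ghost/frozen-cell witness pair. -/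
lemma caseA : ∀ ρ : ℕ, ∀ (T : Diagram) (c r' : ℕ),
    (ρ, c) ∈ T.cells →
    (∀ y, c < y → ¬ T.Occupied (ρ, y)) →
    (r', c) ∈ T.cells →
    (∀ y, c < y → ¬ T.Occupied (r', y)) →
    r' < ρ →
    (∃ t, t < r' ∧ ¬ T.Occupied (t, c)) →
    (∀ q ∈ T.ghosts, ρ < q.1) →
    ∃ (p : ℕ × ℕ) (T1 T2 : Diagram),
      T.Reaches T1 ∧ T.Reaches T2 ∧ p ∈ T1.ghosts ∧ FrozenCell p T2 := by
  intro ρ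
  induction ρ using Nat.strong_induction_on with
  | _ ρ IH =>
  intro T c r' hρc hρr hr'c hr'r hlt hbelow hgh
  obtain ⟨t0, ht0, ht0e⟩ := hbelow
  obtain ⟨e, he1, he2, he3⟩ := exists_max_empty T c ρ t0 (by omega) ht0e
  have hbtw : ∀ x, e < x → x < ρ → (x, c) ∈ T.cells := by
    intro x h1 h2
    rcases he3 x h1 h2 with h | h
    · exact h
    · have h' : ρ < (x, c).1 := hgh _ h
      simp only at h'
      omega
  obtain ⟨TA, hTA⟩ := make_move T ρ c e hρc hρr he1 he2 hbtw
  have hmvA : Move T TA := ⟨ρ, c, e, hTA⟩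
  have hner : e ≠ r' := fun h => he2 (h ▸ Or.inl hr'c)
  rcases lt_or_gt_of_ne hner with helt | hegt
  · -- e < r' : move (r',c) down to e; then (ρ,c) is frozen (ghost at r' blocks below)
    have hbtw' : ∀ x, e < x → x < r' → (x, c) ∈ T.cells := fun x h1 h2 => hbtw x h1 (by omega)
    obtain ⟨TB, hTB⟩ := make_move T r' c e hr'c hr'r helt he2 hbtw'
    refine ⟨(ρ, c), TA, TB, Relation.ReflTransGen.single hmvA,
      Relation.ReflTransGen.single ⟨r', c, e, hTB⟩,
      (move_ghosts hTA).2 (Or.inl rfl), ?_, Or.inr ?_⟩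
    · refine (move_cells_mem hTB).2 (Or.inr ⟨hρc, ?_⟩)
      intro h
      have : ρ = r' := congrArg Prod.fst h
      omega
    · intro t ht hto
      refine ⟨r', ?_, show r' < ρ from hlt, (move_ghosts hTB).2 (Or.inl rfl)⟩
      show t < r'
      by_contra hge
      push_neg at hge
      have htocc : T.Occupied (t, c) := by
        rcases eq_or_lt_of_le hge with rfl | hgt
        · exact Or.inl hr'c
        · exact he3 t (by omega) (show t < ρ from ht)
      exact hto ((move_occupied hTB).2 (Or.inl htocc))
  · -- e > r'
    obtain ⟨e', he'1, he'2, he'3⟩ := exists_max_empty T c r' t0 ht0 ht0e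
    have hbtw'' : ∀ x, e' < x → x < r' → (x, c) ∈ T.cells := by
      intro x h1 h2
      rcases he'3 x h1 h2 with h | h
      · exact h
      · have h' : ρ < (x, c).1 := hgh _ h
        simp only at h'
        omega
    obtain ⟨TB, hTB⟩ := make_move T r' c e' hr'c hr'r he'1 he'2 hbtw''
    by_cases h1 : e + 1 = ρ
    · by_cases h2 : ∃ y, c < y ∧ T.Occupied (e, y)
      · -- jump right: fill row r' to the right of c, freezing (r',c)
        obtain ⟨dh, hdh1, hdh2, hdh3⟩ := exists_max_occ_col T e c h2
        have hdcell : (e, dh) ∈ T.cells := by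
          rcases hdh2 with h | h
          · exact h
          · have h' : ρ < (e, dh).1 := hgh _ h
            simp only at h'
            omega
        obtain ⟨T2, y, hTr, hy1, hy2, hpres⟩ := fill_row e T dh r' hdcell
          (fun y hy => hdh3 y hy) hegt (fun ho => hr'r dh hdh1 ho)
          (fun q hq => Or.inr (by have h' : ρ < q.1 := hgh _ hq; omega))
        exact ⟨(r', c), TB, T2, Relation.ReflTransGen.single ⟨r', c, e', hTB⟩, hTr,
          (move_ghosts hTB).2 (Or.inl rfl),
          ⟨hpres _ hr'c (show c < dh from hdh1),
           Or.inl ⟨y, show c < y from lt_of_lt_of_le hdh1 hy1, hy2⟩⟩⟩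
      · -- recurse on TA with the new upper cell (e,c)
        push_neg at h2
        have h_ec : (e, c) ∈ TA.cells := (move_cells_mem hTA).2 (Or.inl rfl)
        have h_er : ∀ y, c < y → ¬ TA.Occupied (e, y) := by
          intro y hy ho
          rcases (move_occupied hTA).1 ho with h | h
          · exact h2 y hy h
          · have : y = c := congrArg Prod.snd h
            omega
        have h_r'c : (r', c) ∈ TA.cells := by
          refine (move_cells_mem hTA).2 (Or.inr ⟨hr'c, ?_⟩)
          intro h
          have : r' = ρ := congrArg Prod.fst h
          omega
        have h_r'r : ∀ y, c < y → ¬ TA.Occupied (r', y) := by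
          intro y hy ho
          rcases (move_occupied hTA).1 ho with h | h
          · exact hr'r y hy h
          · have h1' : r' = e := congrArg Prod.fst h
            omega
        have h_bel : ∃ t, t < r' ∧ ¬ TA.Occupied (t, c) := by
          refine ⟨e', he'1, fun ho => ?_⟩
          rcases (move_occupied hTA).1 ho with h | h
          · exact he'2 h
          · have : e' = e := congrArg Prod.fst h
            omega
        have h_gh : ∀ q ∈ TA.ghosts, e < q.1 := by
          intro q hq
          rcases (move_ghosts hTA).1 hq with rfl | h
          · show e < ρ
            omega
          · have h' : ρ < q.1 := hgh _ h
            omega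
        obtain ⟨p, T1, T2, hx1, hx2, hx3, hx4⟩ :=
          IH e (by omega) TA c r' h_ec h_er h_r'c h_r'r hegt h_bel h_gh
        exact ⟨p, T1, T2, Relation.ReflTransGen.head hmvA hx1,
          Relation.ReflTransGen.head hmvA hx2, hx3, hx4⟩
    · -- e + 1 < ρ : consider the blocker cell (e+1, c)
      have hsucc : e + 1 < ρ := by omega
      have hcell1 : (e + 1, c) ∈ T.cells := hbtw (e + 1) (by omega) hsucc
      by_cases h2 : ∃ y, c < y ∧ T.Occupied (e + 1, y)
      · obtain ⟨dh, hdh1, hdh2, hdh3⟩ := exists_max_occ_col T (e + 1) c h2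
        have hdcell : (e + 1, dh) ∈ T.cells := by
          rcases hdh2 with h | h
          · exact h
          · have h' : ρ < (e + 1, dh).1 := hgh _ h
            simp only at h'
            omega
        obtain ⟨T2, y, hTr, hy1, hy2, hpres⟩ := fill_row (e + 1) T dh r' hdcell
          (fun y hy => hdh3 y hy) (by omega) (fun ho => hr'r dh hdh1 ho)
          (fun q hq => Or.inr (by have h' : ρ < q.1 := hgh _ hq; omega))
        exact ⟨(r', c), TB, T2, Relation.ReflTransGen.single ⟨r', c, e', hTB⟩, hTr,
          (move_ghosts hTB).2 (Or.inl rfl),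
          ⟨hpres _ hr'c (show c < dh from hdh1),
           Or.inl ⟨y, show c < y from lt_of_lt_of_le hdh1 hy1, hy2⟩⟩⟩
      · -- move the blocker down one step; this freezes (ρ,c)
        push_neg at h2
        obtain ⟨TC, hTC⟩ := make_move T (e + 1) c e hcell1 (fun y hy ho => h2 y hy ho)
          (by omega) he2 (fun x hx1 hx2 => absurd hx1 (by omega))
        refine ⟨(ρ, c), TA, TC, Relation.ReflTransGen.single hmvA,
          Relation.ReflTransGen.single ⟨e + 1, c, e, hTC⟩,
          (move_ghosts hTA).2 (Or.inl rfl), ?_, Or.inr ?_⟩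
        · refine (move_cells_mem hTC).2 (Or.inr ⟨hρc, ?_⟩)
          intro h
          have : ρ = e + 1 := congrArg Prod.fst h
          omega
        · intro t ht hto
          refine ⟨e + 1, ?_, show e + 1 < ρ from hsucc, (move_ghosts hTC).2 (Or.inl rfl)⟩
          show t < e + 1
          by_contra hge
          push_neg at hge
          have htocc : T.Occupied (t, c) := he3 t (by omega) (show t < ρ from ht)
          exact hto ((move_occupied hTC).2 (Or.inl htocc))

/-- if `P_G(D)` is bounded, then `D` has at most one free cell per
column and free cells further right are in strictly lower rows. -/
theorem bounded_free_cells (D : Diagram) (hD : D.ghosts = ∅)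
    (hbdd : (∃! m, m ∈ D.GKD ∧ ∀ U ∈ D.GKD, dle U m → U = m) ∧
            (∃! m, m ∈ D.GKD ∧ ∀ U ∈ D.GKD, dle m U → U = m)) :
    ∀ r c r' c', Free D r c → Free D r' c' →
      (c = c' → r = r') ∧ (c < c' → r' < r) := by
  intro r c r' c' hf hf'
  obtain ⟨h1c, h1r, t1, ht1, ht1e⟩ := hf
  obtain ⟨h2c, h2r, t2, ht2, ht2e⟩ := hf'
  have hghost : ∀ (n : ℕ), ∀ q ∈ D.ghosts, n < q.1 := by
    intro n q hq
    rw [hD] at hq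
    exact absurd hq (Finset.notMem_empty q)
  constructor
  · intro hcc
    subst hcc
    by_contra hrne
    rcases lt_trichotomy r r' with h | h | h
    · obtain ⟨p, T1, T2, hx1, hx2, hx3, hx4⟩ :=
        caseA r' D c r h2c h2r h1c h1r h ⟨t1, ht1, ht1e⟩ (hghost r')
      exact ghost_frozen_contra D hbdd.1 hx1 hx2 hx3 hx4
    · exact hrne h
    · obtain ⟨p, T1, T2, hx1, hx2, hx3, hx4⟩ :=
        caseA r D c r' h1c h1r h2c h2r h ⟨t2, ht2, ht2e⟩ (hghost r)
      exact ghost_frozen_contra D hbdd.1 hx1 hx2 hx3 hx4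
  · intro hcc
    rcases lt_trichotomy r r' with h | h | h
    · exfalso
      obtain ⟨e, he1, he2, he3⟩ := exists_max_empty D c r t1 ht1 ht1e
      have hbtw : ∀ x, e < x → x < r → (x, c) ∈ D.cells := by
        intro x hx1 hx2
        rcases he3 x hx1 hx2 with hh | hh
        · exact hh
        · rw [hD] at hh
          exact absurd hh (Finset.notMem_empty _)
      obtain ⟨T1, hT1⟩ := make_move D r c e h1c h1r he1 he2 hbtw
      have hnotocc : ¬ D.Occupied (r, c') := h1r c' hcc
      obtain ⟨T2, y, hTr, hy1, hy2, hpres⟩ := fill_row r' D c' r h2c h2r h hnotocc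
        (fun q hq => by rw [hD] at hq; exact absurd hq (Finset.notMem_empty _))
      exact ghost_frozen_contra D hbdd.1 (Relation.ReflTransGen.single ⟨r, c, e, hT1⟩) hTr
        ((move_ghosts hT1).2 (Or.inl rfl))
        ⟨hpres _ h1c (show c < c' from hcc), Or.inl ⟨y, lt_of_lt_of_le hcc hy1, hy2⟩⟩
    · exfalso
      subst h
      exact h1r c' hcc (Or.inl h2c)
    · exact h
end

section
/- Let D be a diagram with no ghost cells, and let D₀, D₁, D₂ ∈ GKD(D) be distinct with D₁ ⋖ D₀ and D₂ ⋖ D₀, where D₁ = G(D₀,r₁) moves cell (r₁,c₁) and D₂ = G(D₀,r₂) moves cell (r₂,c₂), with r₁ > r₂. If c₁ = c₂ = c and every position (r,c) with r₂ ≤ r ≤ r₁ is occupied by a regular cell in D₀, then D₁ and D₂ have no common lower bound in P_G(D). -/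
open Diagram

/-- Ghost cells are monotone along reachability. -/
lemma ghost_mono {U U' : Diagram} (h : U.Reaches U') : U.ghosts ⊆ U'.ghosts := by
  induction h with
  | refl => exact Finset.Subset.refl _
  | tail _ hmv ih =>
    obtain ⟨r, c, r', hs⟩ := hmv
    exact ih.trans (hs.2.2.2.2.2.2 ▸ Finset.subset_insert _ _)

/-- Occupancy is monotone along reachability. -/
lemma occ_mono_s17 {U U' : Diagram} (h : U.Reaches U') {p : ℕ × ℕ}
    (hp : U.Occupied p) : U'.Occupied p := by
  induction h with
  | refl => exact hp
  | tail _ hmv ih =>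
    obtain ⟨r, c, r', hs⟩ := hmv
    obtain ⟨_, _, _, _, _, hc, hg⟩ := hs
    rcases ih with hcell | hghost
    · by_cases hpe : p = (r, c)
      · exact Or.inr (hg ▸ (hpe ▸ Finset.mem_insert_self _ _))
      · exact Or.inl (hc ▸ Finset.mem_insert_of_mem (Finset.mem_erase.mpr ⟨hpe, hcell⟩))
    · exact Or.inr (hg ▸ Finset.mem_insert_of_mem hghost)

/-- Key invariant: below a ghost at `(r₂,c)` with a solid run of occupied positions
up to row `r₁ > r₂`, no ghost can ever appear at `(r₁,c)`. -/
lemma no_ghost_appears {r₁ r₂ c : ℕ} (hr : r₂ < r₁) {U U' : Diagram}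
    (h : U.Reaches U')
    (hg2 : (r₂, c) ∈ U.ghosts)
    (hocc : ∀ ρ, r₂ < ρ → ρ < r₁ → U.Occupied (ρ, c))
    (hng : (r₁, c) ∉ U.ghosts) : (r₁, c) ∉ U'.ghosts := by
  induction h with
  | refl => exact hng
  | @tail V W hUV hmv ih =>
    have hg2V : (r₂, c) ∈ V.ghosts := ghost_mono hUV hg2
    have hoccV : ∀ ρ, r₂ < ρ → ρ < r₁ → V.Occupied (ρ, c) :=
      fun ρ h1 h2 => occ_mono_s17 hUV (hocc ρ h1 h2)
    obtain ⟨r, c', r', hs⟩ := hmv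
    obtain ⟨hcell, _, hlt, hempty, hbetween, hcW, hgW⟩ := hs
    intro hmem
    rw [hgW] at hmem
    rcases Finset.mem_insert.mp hmem with heq | hmem'
    · -- the move was from (r₁, c), impossible
      have hr1 : r = r₁ := (Prod.mk.injEq .. ▸ heq).1.symm ▸ rfl
      obtain ⟨hre, hce⟩ := Prod.mk.injEq .. ▸ heq
      subst hre hce
      rcases lt_trichotomy r' r₂ with h1 | h1 | h1
      · have : (r₂, c) ∈ V.cells := hbetween r₂ h1 hr
        exact Finset.disjoint_left.mp V.disj this hg2V
      · exact hempty (h1 ▸ Or.inr hg2V)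
      · exact hempty (hoccV r' h1 hlt)
    · exact ih hmem'

/-- two ghost moves from `D₀` in the same column `c` whose sources are
joined by a solid run of regular cells yield diagrams with no common lower bound. -/

theorem same_column_no_common_lower_bound (D : Diagram) (hD : D.ghosts = ∅)
    (D₀ D₁ D₂ : Diagram)
    (h₀ : D₀ ∈ D.GKD) (h₁ : D₁ ∈ D.GKD) (h₂ : D₂ ∈ D.GKD)
    (hne₁ : D₁ ≠ D₀) (hne₂ : D₂ ≠ D₀) (hne : D₁ ≠ D₂)
    (hc₁ : CoveredBy D₁ D₀) (hc₂ : CoveredBy D₂ D₀)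
    (r₁ r₂ c r₁' r₂' : ℕ) (hr : r₂ < r₁)
    (hm₁ : MoveSpec D₀ r₁ c r₁' D₁) (hm₂ : MoveSpec D₀ r₂ c r₂' D₂)
    (hfull : ∀ r, r₂ ≤ r → r ≤ r₁ → (r, c) ∈ D₀.cells) :
    ¬ ∃ T ∈ D.GKD, dle T D₁ ∧ dle T D₂ := by
  rintro ⟨T, hT, hle1, hle2⟩
  -- from D₁: ghost at (r₁, c) is in T
  have hg1 : (r₁, c) ∈ T.ghosts :=
    ghost_mono hle1 (hm₁.2.2.2.2.2.2 ▸ Finset.mem_insert_self _ _)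
  -- from D₂: ghost at (r₁, c) can never appear
  have hg2 : (r₂, c) ∈ D₂.ghosts := hm₂.2.2.2.2.2.2 ▸ Finset.mem_insert_self _ _
  have hocc : ∀ ρ, r₂ < ρ → ρ < r₁ → D₂.Occupied (ρ, c) := by
    intro ρ h1 h2
    refine Or.inl ?_
    rw [hm₂.2.2.2.2.2.1]
    exact Finset.mem_insert_of_mem (Finset.mem_erase.mpr
      ⟨by simp [h1.ne'], hfull ρ h1.le h2.le⟩)
  have hng : (r₁, c) ∉ D₂.ghosts := by
    rw [hm₂.2.2.2.2.2.2]
    intro hmem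
    rcases Finset.mem_insert.mp hmem with heq | hmem'
    · exact absurd (Prod.mk.injEq .. ▸ heq).1 hr.ne'
    · exact Finset.disjoint_left.mp D₀.disj hm₁.1 hmem'
  exact no_ghost_appears hr hle2 hg2 hocc hng hg1
end

section
/- Let D be a diagram with no ghost cells, and let D₀, D₁, D₂ ∈ GKD(D) be distinct with D₁ ⋖ D₀ and D₂ ⋖ D₀, where D₁ = G(D₀,r₁) moves cell (r₁,c₁) down to (r₁*,c₁) and D₂ = G(D₀,r₂) moves cell (r₂,c₂) down to (r₂*,c₂), with r₁ > r₂ and c₁ > c₂. If r₁* = r₂ (the cell from row r₁ lands in row r₂), then D₁ and D₂ have no common lower bound in P_G(D). -/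
open Diagram

lemma occ_mono_s18 {D D' : Diagram} (h : Move D D') {p : ℕ × ℕ} (hp : D.Occupied p) :
    D'.Occupied p := by
  obtain ⟨r, c, r', hrc, _, _, _, _, hcells, hghosts⟩ := h
  rcases hp with hp | hp
  · by_cases hpe : p = (r, c)
    · right; rw [hghosts]; simp [hpe]
    · left; rw [hcells]; exact Finset.mem_insert_of_mem (Finset.mem_erase.mpr ⟨hpe, hp⟩)
  · right; rw [hghosts]; exact Finset.mem_insert_of_mem hp

lemma occ_mono_reaches {D D' : Diagram} (h : D.Reaches D') {p : ℕ × ℕ}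
    (hp : D.Occupied p) : D'.Occupied p := by
  induction h with
  | refl => exact hp
  | tail _ hm ih => exact occ_mono_s18 hm ih

lemma no_new_ghost {D T : Diagram} (h : D.Reaches T) {r₂ c₂ c₁ : ℕ} (hc : c₂ < c₁)
    (hocc : D.Occupied (r₂, c₁)) (hg : (r₂, c₂) ∉ D.ghosts) : (r₂, c₂) ∉ T.ghosts := by
  induction h with
  | refl => exact hg
  | tail hb hm ih =>
    obtain ⟨r, c, r', hrc, hright, _, _, _, _, hghosts⟩ := hm
    rw [hghosts]
    intro hmem
    rcases Finset.mem_insert.mp hmem with heq | hmem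
    · have h1 : r = r₂ := (Prod.mk.injEq _ _ _ _ ▸ heq).1.symm
      have h2 : c = c₂ := (Prod.mk.injEq _ _ _ _ ▸ heq).2.symm
      subst h1; subst h2
      exact hright c₁ hc (occ_mono_reaches hb hocc)
    · exact ih hmem

/-- if the cell moved from row `r₁` (in a column right of `c₂`) lands
exactly in row `r₂`, then `D₁` and `D₂` have no common lower bound. -/
theorem landing_row_no_common_lower_bound (D : Diagram) (hD : D.ghosts = ∅)
    (D₀ D₁ D₂ : Diagram)
    (h₀ : D₀ ∈ D.GKD) (h₁ : D₁ ∈ D.GKD) (h₂ : D₂ ∈ D.GKD)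
    (hne₁ : D₁ ≠ D₀) (hne₂ : D₂ ≠ D₀) (hne : D₁ ≠ D₂)
    (hc₁ : CoveredBy D₁ D₀) (hc₂ : CoveredBy D₂ D₀)
    (r₁ c₁ r₁' r₂ c₂ r₂' : ℕ) (hr : r₂ < r₁) (hc : c₂ < c₁)
    (hm₁ : MoveSpec D₀ r₁ c₁ r₁' D₁) (hm₂ : MoveSpec D₀ r₂ c₂ r₂' D₂)
    (hland : r₁' = r₂) :
    ¬ ∃ T ∈ D.GKD, dle T D₁ ∧ dle T D₂ := by
  rintro ⟨T, -, hT1, hT2⟩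
  obtain ⟨_, _, _, _, _, hcells₁, hghosts₁⟩ := hm₁
  obtain ⟨hrc₂, _, _, _, _, _, hghosts₂⟩ := hm₂
  -- (r₂, c₂) is a ghost of D₂, hence of T
  have hgT : (r₂, c₂) ∈ T.ghosts := by
    have hg₂ : (r₂, c₂) ∈ D₂.ghosts := by rw [hghosts₂]; exact Finset.mem_insert_self _ _
    clear hghosts₂ hT1
    induction hT2 with
    | refl => exact hg₂
    | tail _ hm ih =>
      obtain ⟨r, c, r', _, _, _, _, _, _, hghosts⟩ := hm
      rw [hghosts]; exact Finset.mem_insert_of_mem ih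
  -- but D₁ has a cell at (r₂,c₁) and no ghost at (r₂,c₂)
  have hocc : D₁.Occupied (r₂, c₁) := by
    left; rw [hcells₁, ← hland]; exact Finset.mem_insert_self _ _
  have hg₁ : (r₂, c₂) ∉ D₁.ghosts := by
    rw [hghosts₁]
    intro hmem
    rcases Finset.mem_insert.mp hmem with heq | hmem
    · exact absurd (Prod.mk.injEq _ _ _ _ ▸ heq).2 hc.ne
    · exact (Finset.disjoint_left.mp D₀.disj hrc₂) hmem
  exact no_new_ghost hT1 hc hocc hg₁ hgT
end
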